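/- arXiv:2106.07498 — 8 statements merged into one kernel-verified Lean document; each statement's English description precedes it below -/
import Mathlib

section
/- Let G be a compact topological group with normalized Haar probability measure μ, and let K be a closed subgroup such that (G,K) is a Gelfand pair, i.e. for all continuous bi-K-invariant functions f,g : G → ℂ the convolutions satisfy f⋆g = g⋆f. Let V be a finite-dimensional complex inner product space and let φ : G → U(V) be a continuous irreducible unitary representation, with character χ_φ(x) = tr(φ(x)). Let u : G → ℂ be a continuous bi-K-invariant function and set û(φ) = ∫_G u(x)·φ(x⁻¹) dμ(x) ∈ End(V). Then tr(û(φ)) = ∫_G u(x)·conj(χ_φ(x)) dμ(x) and û(φ) ∘ û(φ) = tr(û(φ)) · û(φ); in particular, every nonzero eigenvalue of û(φ) equals ⟨u, χ_φ⟩ = ∫_G u(x)·conj(χ_φ(x)) dμ(x). -/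
/-!
Schur's lemma turns the average of `φ x ∘ B ∘ φ x⁻¹` over `G` into `(tr B / dim V) • 1`, so the
Fourier transform of the matrix coefficient `x ↦ ⟪a, φ x b⟫` is the rank-one operator
`w ↦ (⟪a, w⟫ / dim V) • b`. The transform turns convolution into composition (in reverse order),
so for `K`-fixed vectors `e ≠ 0` and `w`, commutativity of the convolution of the bi-`K`-invariant
coefficients `⟪e, φ x e⟫` and `⟪e, φ x w⟫` forces `w ∈ ℂ e`: the `K`-fixed vectors form at most a
line. Right `K`-invariance of `u` puts the range of `û(φ)` into this line, and an operator `A` of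
rank at most one satisfies `A ∘ A = tr A • A`. The trace formula is `tr φ(x⁻¹) = conj (tr φ(x))`
for unitary `φ`.
-/

open MeasureTheory ComplexConjugate

noncomputable section

namespace LinearMap

variable {K V : Type*} [Field K] [AddCommGroup V] [Module K V]

theorem eq_of_comp_self_eq_smul_of_hasEigenvalue {A : V →ₗ[K] V} {c t : K}
    (hA : A ∘ₗ A = c • A) (ht : Module.End.HasEigenvalue A t) (ht0 : t ≠ 0) : t = c := by
  obtain ⟨v, hv⟩ := ht.exists_hasEigenvector
  have hAv : A v = t • v := hv.apply_eq_smul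
  have : (t * t) • v = (c * t) • v := by
    simpa [hAv, smul_smul] using LinearMap.congr_fun hA v
  exact mul_right_cancel₀ ht0 (smul_left_injective K hv.2 this)

variable [FiniteDimensional K V]

theorem comp_self_eq_trace_smul_of_range_le_span_singleton {A : V →ₗ[K] V} {e : V}
    (hA : range A ≤ K ∙ e) : A ∘ₗ A = trace K V A • A := by
  by_cases he : e = 0
  · obtain rfl : A = 0 := by
      simpa [he, Submodule.span_singleton_eq_bot.mpr, range_eq_bot] using hA
    simp
  let f : V →ₗ[K] K := LinearEquiv.coord K V e he ∘ₗ A.codRestrict _ fun v => hA ⟨v, rfl⟩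
  have hAf : A = f.smulRight e := by
    ext v
    exact (LinearEquiv.coord_apply_smul K V e he ⟨A v, _⟩).symm
  rw [hAf, trace_smulRight]
  ext v
  simp only [comp_apply, smulRight_apply, map_smul, smul_apply, smul_smul, mul_comm]

section InnerProductSpace

variable {𝕜 V : Type*} [RCLike 𝕜] [NormedAddCommGroup V] [InnerProductSpace 𝕜 V]
  [FiniteDimensional 𝕜 V]

theorem trace_adjoint (A : V →ₗ[𝕜] V) : trace 𝕜 V (adjoint A) = conj (trace 𝕜 V A) := by
  let b := (stdOrthonormalBasis 𝕜 V).toBasis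
  rw [trace_eq_matrix_trace 𝕜 b, trace_eq_matrix_trace 𝕜 b,
    toMatrix_adjoint (stdOrthonormalBasis 𝕜 V) (stdOrthonormalBasis 𝕜 V),
    Matrix.trace_conjTranspose]
  rfl

end InnerProductSpace

end LinearMap

namespace Module.End

variable {ι K V : Type*} [Field K] [IsAlgClosed K] [CharZero K] [AddCommGroup V] [Module K V]
  [FiniteDimensional K V]

theorem eq_trace_div_finrank_smul_one_of_commute {ρ : ι → Module.End K V}
    (hirr : ∀ W : Submodule K V, (∀ i, ∀ w ∈ W, ρ i w ∈ W) → W = ⊥ ∨ W = ⊤)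
    {T : Module.End K V} (hT : ∀ i, Commute (ρ i) T) :
    T = (LinearMap.trace K V T / Module.finrank K V) • 1 := by
  cases subsingleton_or_nontrivial V
  · exact Subsingleton.elim _ _
  obtain ⟨c, hc⟩ := exists_eigenvalue T
  have hinv : ∀ i, ∀ w ∈ eigenspace T c, ρ i w ∈ eigenspace T c := by
    intro i w hw
    rw [mem_eigenspace_iff] at hw ⊢
    rw [← Module.End.mul_apply, ← (hT i).eq, Module.End.mul_apply, hw, map_smul]
  have hTc : T = c • 1 := by
    ext w
    have hw : w ∈ eigenspace T c := ((hirr _ hinv).resolve_left hc).symm ▸ Submodule.mem_top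
    exact mem_eigenspace_iff.mp hw
  have hd : (Module.finrank K V : K) ≠ 0 := Nat.cast_ne_zero.mpr Module.finrank_pos.ne'
  rw [hTc, map_smul, LinearMap.trace_one, smul_eq_mul, mul_div_cancel_right₀ c hd]

end Module.End

theorem MonoidHom.map_inv_eq_star_of_mem_unitary {G R : Type*} [Group G] [Monoid R] [StarMul R]
    (φ : G →* R) {g : G} (hg : φ g ∈ unitary R) : φ g⁻¹ = star (φ g) :=
  (left_inv_eq_right_inv (Unitary.star_mul_self_of_mem hg)
    (by rw [← map_mul, mul_inv_cancel, map_one])).symm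

namespace MeasureTheory.Measure

variable {G : Type*} [Group G] [TopologicalSpace G] [IsTopologicalGroup G] [CompactSpace G]
  [MeasurableSpace G] [BorelSpace G] (μ : Measure G) [μ.IsHaarMeasure] [IsProbabilityMeasure μ]

instance isMulRightInvariant_of_isProbabilityMeasure : μ.IsMulRightInvariant where
  map_mul_right_eq_self g := by
    have : IsProbabilityMeasure (μ.map (· * g)) :=
      isProbabilityMeasure_map (measurable_mul_const g).aemeasurable
    exact isHaarMeasure_eq_of_isProbabilityMeasure _ μ

instance isInvInvariant_of_isProbabilityMeasure : μ.IsInvInvariant where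
  inv_eq_self := by
    have : IsProbabilityMeasure μ.inv := isProbabilityMeasure_map measurable_inv.aemeasurable
    have : μ.inv.IsHaarMeasure := { }
    exact isHaarMeasure_eq_of_isProbabilityMeasure _ μ

end MeasureTheory.Measure

theorem Continuous.integrable_of_compactSpace {X E : Type*} [TopologicalSpace X] [CompactSpace X]
    [MeasurableSpace X] [OpensMeasurableSpace X] {μ : Measure X} [IsFiniteMeasureOnCompacts μ]
    [NormedAddCommGroup E] {f : X → E} (hf : Continuous f) : Integrable f μ :=
  hf.integrable_of_hasCompactSupport (.of_compactSpace f)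

namespace ContinuousLinearMap

variable {X 𝕜 E : Type*} [MeasurableSpace X] {μ : Measure X} [RCLike 𝕜]
  [NormedAddCommGroup E] [NormedSpace 𝕜 E] [CompleteSpace E] [NormedSpace ℝ E]
  {F : X → E →L[𝕜] E}

theorem comp_integral (A : E →L[𝕜] E) (hF : Integrable F μ) :
    A ∘L ∫ x, F x ∂μ = ∫ x, A ∘L F x ∂μ :=
  ((compL 𝕜 E E E A).integral_comp_comm hF).symm

theorem integral_comp (A : E →L[𝕜] E) (hF : Integrable F μ) :
    (∫ x, F x ∂μ) ∘L A = ∫ x, F x ∘L A ∂μ :=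
  (((compL 𝕜 E E E).flip A).integral_comp_comm hF).symm

theorem trace_integral [FiniteDimensional 𝕜 E] (hF : Integrable F μ) :
    LinearMap.trace 𝕜 E ((∫ x, F x ∂μ : E →L[𝕜] E) : E →ₗ[𝕜] E)
      = ∫ x, LinearMap.trace 𝕜 E (F x) ∂μ :=
  (LinearMap.toContinuousLinearMap (LinearMap.trace 𝕜 E ∘ₗ coeLM 𝕜)).integral_comp_comm hF |>.symm

end ContinuousLinearMap

section Representation

variable {G V : Type*} [Group G] [NormedAddCommGroup V] [InnerProductSpace ℂ V]

def IsBiInvariant (K : Subgroup G) (f : G → ℂ) : Prop :=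
  ∀ k₁ ∈ K, ∀ k₂ ∈ K, ∀ x, f (k₁ * x * k₂) = f x

def matrixCoeff (φ : G →* (V →L[ℂ] V)) (a b : V) (x : G) : ℂ := inner ℂ a (φ x b)

def fourierOp [MeasurableSpace G] (μ : Measure G) (φ : G →* (V →L[ℂ] V)) (u : G → ℂ) :
    V →L[ℂ] V :=
  ∫ x, u x • φ x⁻¹ ∂μ

def mulConv [MeasurableSpace G] (μ : Measure G) (f g : G → ℂ) (x : G) : ℂ :=
  ∫ y, f y * g (y⁻¹ * x) ∂μ

def IsGelfandPair [TopologicalSpace G] [MeasurableSpace G] (μ : Measure G) (K : Subgroup G) :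
    Prop :=
  ∀ f g : G → ℂ, Continuous f → Continuous g → IsBiInvariant K f → IsBiInvariant K g →
    mulConv μ f g = mulConv μ g f

variable {φ : G →* (V →L[ℂ] V)}

theorem trace_map_inv_of_mem_unitary [CompleteSpace V] [FiniteDimensional ℂ V] {g : G}
    (hg : φ g ∈ unitary (V →L[ℂ] V)) :
    LinearMap.trace ℂ V (φ g⁻¹) = conj (LinearMap.trace ℂ V (φ g)) := by
  rw [φ.map_inv_eq_star_of_mem_unitary hg, ContinuousLinearMap.star_eq_adjoint,
    ← ContinuousLinearMap.adjoint_toLinearMap, LinearMap.trace_adjoint]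

theorem isBiInvariant_matrixCoeff [CompleteSpace V] (hφ : ∀ g, φ g ∈ unitary (V →L[ℂ] V))
    {K : Subgroup G} {a b : V} (ha : ∀ k ∈ K, φ k a = a) (hb : ∀ k ∈ K, φ k b = b) :
    IsBiInvariant K (matrixCoeff φ a b) := by
  intro k₁ hk₁ k₂ hk₂ x
  simp only [matrixCoeff, map_mul, mul_apply_eq_comp, hb k₂ hk₂]
  conv_lhs => rw [← ha k₁ hk₁]
  exact ContinuousLinearMap.inner_map_map_of_mem_unitary (hφ k₁) _ _

theorem continuous_matrixCoeff [TopologicalSpace G] (hφc : Continuous φ) (a b : V) :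
    Continuous (matrixCoeff φ a b) :=
  continuous_const.inner (hφc.clm_apply continuous_const)

variable [TopologicalSpace G] [IsTopologicalGroup G] [CompactSpace G] [MeasurableSpace G]
  [BorelSpace G] {μ : Measure G} [μ.IsHaarMeasure]

theorem integrable_smul_map_inv (hφc : Continuous φ) {u : G → ℂ} (hu : Continuous u) :
    Integrable (fun x => u x • φ x⁻¹) μ :=
  (hu.smul (hφc.comp continuous_inv)).integrable_of_compactSpace

variable [CompleteSpace V]

theorem fourierOp_mulConv (hφc : Continuous φ) {f g : G → ℂ} (hf : Continuous f)
    (hg : Continuous g) :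
    fourierOp μ φ (mulConv μ f g) = fourierOp μ φ g ∘L fourierOp μ φ f := by
  have hswap : fourierOp μ φ (mulConv μ f g)
      = ∫ y, ∫ x, (f y * g (y⁻¹ * x)) • φ x⁻¹ ∂μ ∂μ := by
    simp_rw [fourierOp, mulConv, ← integral_smul_const]
    refine integral_integral_swap_of_hasCompactSupport ?_ (.of_compactSpace _)
    exact ((hf.comp continuous_snd).mul (hg.comp (continuous_snd.inv.mul continuous_fst))).smul
      (hφc.comp continuous_fst.inv)
  have hinner (y : G) : ∫ x, (f y * g (y⁻¹ * x)) • φ x⁻¹ ∂μ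
      = fourierOp μ φ g ∘L (f y • φ y⁻¹) := by
    rw [← integral_mul_left_eq_self _ y, fourierOp,
      ContinuousLinearMap.integral_comp _ (integrable_smul_map_inv hφc hg)]
    congr 1
    funext x
    rw [inv_mul_cancel_left, mul_inv_rev, map_mul, ContinuousLinearMap.mul_def,
      ContinuousLinearMap.comp_smul, ContinuousLinearMap.smul_comp, smul_smul, mul_comm]
  rw [hswap, show fourierOp μ φ f = ∫ x, f x • φ x⁻¹ ∂μ from rfl,
    ContinuousLinearMap.comp_integral _ (integrable_smul_map_inv hφc hf)]
  simp_rw [hinner]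

theorem trace_fourierOp [FiniteDimensional ℂ V] (hφc : Continuous φ)
    (hφ : ∀ g, φ g ∈ unitary (V →L[ℂ] V)) {u : G → ℂ} (hu : Continuous u) :
    LinearMap.trace ℂ V (fourierOp μ φ u) = ∫ x, u x * conj (LinearMap.trace ℂ V (φ x)) ∂μ := by
  rw [fourierOp, ContinuousLinearMap.trace_integral (integrable_smul_map_inv hφc hu)]
  simp_rw [ContinuousLinearMap.toLinearMap_smul, map_smul, trace_map_inv_of_mem_unitary (hφ _),
    smul_eq_mul]

variable [IsProbabilityMeasure μ]

theorem map_comp_fourierOp (hφc : Continuous φ) {u : G → ℂ} (hu : Continuous u) (g : G) :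
    φ g ∘L fourierOp μ φ u = fourierOp μ φ (fun x => u (x * g)) := by
  rw [fourierOp, ContinuousLinearMap.comp_integral _ (integrable_smul_map_inv hφc hu), fourierOp,
    ← integral_mul_right_eq_self _ g]
  congr 1
  funext x
  rw [ContinuousLinearMap.comp_smul, ← ContinuousLinearMap.mul_def, ← map_mul, mul_inv_rev,
    mul_inv_cancel_left]

variable [FiniteDimensional ℂ V]

theorem integral_map_comp_comp_map_inv (hφc : Continuous φ)
    (hirr : ∀ W : Submodule ℂ V, (∀ g, ∀ w ∈ W, φ g w ∈ W) → W = ⊥ ∨ W = ⊤) (B : V →L[ℂ] V) :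
    ∫ x, φ x ∘L B ∘L φ x⁻¹ ∂μ = (LinearMap.trace ℂ V B / Module.finrank ℂ V) • 1 := by
  set T := ∫ x, φ x ∘L B ∘L φ x⁻¹ ∂μ with hT
  have hint : Integrable (fun x => φ x ∘L B ∘L φ x⁻¹) μ :=
    (hφc.clm_comp (continuous_const.clm_comp (hφc.comp continuous_inv))).integrable_of_compactSpace
  have hcomm (g : G) : φ g ∘L T = T ∘L φ g := by
    let F x := φ x ∘L B ∘L φ (x⁻¹ * g)
    rw [ContinuousLinearMap.comp_integral _ hint, ContinuousLinearMap.integral_comp _ hint]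
    calc ∫ x, φ g ∘L φ x ∘L B ∘L φ x⁻¹ ∂μ = ∫ x, F (g * x) ∂μ := by
          simp only [F, mul_inv_rev, inv_mul_cancel_right]
          simp only [map_mul, ContinuousLinearMap.mul_def, ContinuousLinearMap.comp_assoc]
      _ = ∫ x, F x ∂μ := integral_mul_left_eq_self F g
      _ = ∫ x, (φ x ∘L B ∘L φ x⁻¹) ∘L φ g ∂μ := by
          simp only [F, map_mul, ContinuousLinearMap.mul_def, ContinuousLinearMap.comp_assoc]
  have htrace : LinearMap.trace ℂ V T = LinearMap.trace ℂ V B := by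
    have hconj (x : G) : LinearMap.trace ℂ V
        ((φ x : V →ₗ[ℂ] V) ∘ₗ (B : V →ₗ[ℂ] V) ∘ₗ (φ x⁻¹ : V →ₗ[ℂ] V)) = LinearMap.trace ℂ V B := by
      rw [LinearMap.trace_comp_comm', LinearMap.comp_assoc,
        ← ContinuousLinearMap.toLinearMap_comp (φ x⁻¹) (φ x), ← ContinuousLinearMap.mul_def,
        ← map_mul, inv_mul_cancel, map_one]
      rfl
    simp [hT, ContinuousLinearMap.trace_integral hint, hconj]
  rw [← htrace]
  exact ContinuousLinearMap.coe_injective <|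
    Module.End.eq_trace_div_finrank_smul_one_of_commute (ρ := fun g => (φ g : V →ₗ[ℂ] V)) hirr
      fun g => congrArg ContinuousLinearMap.toLinearMap (hcomm g)

theorem fourierOp_matrixCoeff_apply (hφc : Continuous φ)
    (hirr : ∀ W : Submodule ℂ V, (∀ g, ∀ w ∈ W, φ g w ∈ W) → W = ⊥ ∨ W = ⊤) (a b w : V) :
    fourierOp μ φ (matrixCoeff φ a b) w = (inner ℂ a w / Module.finrank ℂ V) • b := by
  let B : V →L[ℂ] V := (innerSL ℂ a).smulRight w
  have hint : Integrable (fun x => φ x⁻¹ ∘L B ∘L φ x) μ :=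
    ((hφc.comp continuous_inv).clm_comp (continuous_const.clm_comp hφc)).integrable_of_compactSpace
  calc fourierOp μ φ (matrixCoeff φ a b) w = ∫ x, (φ x⁻¹ ∘L B ∘L φ x) b ∂μ := by
        rw [fourierOp, ContinuousLinearMap.integral_apply
          (integrable_smul_map_inv hφc (continuous_matrixCoeff hφc a b))]
        simp [B, matrixCoeff]
    _ = (∫ x, φ x ∘L B ∘L φ x⁻¹ ∂μ) b := by
        rw [← ContinuousLinearMap.integral_apply hint, ← integral_inv_eq_self]
        simp only [inv_inv]
    _ = (inner ℂ a w / Module.finrank ℂ V) • b := by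
        simp [integral_map_comp_comp_map_inv hφc hirr, B]

theorem mem_span_singleton_of_isGelfandPair (hφc : Continuous φ)
    (hφ : ∀ g, φ g ∈ unitary (V →L[ℂ] V))
    (hirr : ∀ W : Submodule ℂ V, (∀ g, ∀ w ∈ W, φ g w ∈ W) → W = ⊥ ∨ W = ⊤)
    {K : Subgroup G} (hGP : IsGelfandPair μ K) {e w : V} (he : ∀ k ∈ K, φ k e = e)
    (hw : ∀ k ∈ K, φ k w = w) (he0 : e ≠ 0) : w ∈ ℂ ∙ e := by
  have : Nontrivial V := nontrivial_of_ne e 0 he0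
  set s : ℂ := inner ℂ e e / Module.finrank ℂ V
  have hs : s ≠ 0 :=
    div_ne_zero (inner_self_ne_zero.mpr he0) (Nat.cast_ne_zero.mpr Module.finrank_pos.ne')
  have hcomm : (s * s) • w = (s * (inner ℂ e w / Module.finrank ℂ V)) • e := by
    have := congrArg (fun F => fourierOp μ φ F e) <|
      hGP _ _ (continuous_matrixCoeff hφc e e) (continuous_matrixCoeff hφc e w)
        (isBiInvariant_matrixCoeff hφ he he) (isBiInvariant_matrixCoeff hφ he hw)
    simpa only [fourierOp_mulConv hφc (continuous_matrixCoeff hφc _ _)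
      (continuous_matrixCoeff hφc _ _), ContinuousLinearMap.comp_apply,
      fourierOp_matrixCoeff_apply hφc hirr, inner_smul_right, mul_div_assoc] using this
  rw [← Submodule.smul_mem_iff _ (mul_ne_zero hs hs), hcomm]
  exact Submodule.smul_mem _ _ (Submodule.mem_span_singleton_self e)

theorem fourierOp_comp_self_eq_trace_smul (hφc : Continuous φ) (hφ : ∀ g, φ g ∈ unitary (V →L[ℂ] V))
    (hirr : ∀ W : Submodule ℂ V, (∀ g, ∀ w ∈ W, φ g w ∈ W) → W = ⊥ ∨ W = ⊤)
    {K : Subgroup G} (hGP : IsGelfandPair μ K) {u : G → ℂ} (hu : Continuous u)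
    (huK : ∀ k ∈ K, ∀ x, u (x * k) = u x) :
    fourierOp μ φ u ∘L fourierOp μ φ u
      = LinearMap.trace ℂ V (fourierOp μ φ u) • fourierOp μ φ u := by
  set A := fourierOp μ φ u
  have hfixed (v : V) : ∀ k ∈ K, φ k (A v) = A v := fun k hk => by
    rw [← ContinuousLinearMap.comp_apply, map_comp_fourierOp hφc hu k, funext (huK k hk)]
  obtain hA | ⟨a, ha⟩ : A = 0 ∨ ∃ a, A a ≠ 0 := by
    by_contra! h
    exact h.1 (ContinuousLinearMap.ext h.2)
  · simp [hA]
  · exact ContinuousLinearMap.coe_injective <|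
      LinearMap.comp_self_eq_trace_smul_of_range_le_span_singleton (e := A a) <| by
        rintro _ ⟨b, rfl⟩
        exact mem_span_singleton_of_isGelfandPair hφc hφ hirr hGP (hfixed a) (hfixed b) ha

end Representation

theorem fourier_coefficient_of_biinvariant_function_gelfand_general
    {G : Type*} [Group G] [TopologicalSpace G] [IsTopologicalGroup G] [CompactSpace G]
    [MeasurableSpace G] [BorelSpace G]
    (μ : Measure G) [μ.IsHaarMeasure] [IsProbabilityMeasure μ]
    (K : Subgroup G)
    -- `(G, K)` is a Gelfand pair: continuous bi-`K`-invariant functions commute under convolution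
    (hGelfand : ∀ f g : G → ℂ, Continuous f → Continuous g →
      (∀ k₁ ∈ K, ∀ k₂ ∈ K, ∀ x : G, f (k₁ * x * k₂) = f x) →
      (∀ k₁ ∈ K, ∀ k₂ ∈ K, ∀ x : G, g (k₁ * x * k₂) = g x) →
      ∀ x : G, (∫ y, f y * g (y⁻¹ * x) ∂μ) = ∫ y, g y * f (y⁻¹ * x) ∂μ)
    {V : Type*} [NormedAddCommGroup V] [InnerProductSpace ℂ V] [FiniteDimensional ℂ V]
    -- a continuous irreducible unitary representation of `G` on `V`
    (φ : G →* (V →L[ℂ] V)) (hφcont : Continuous φ)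
    (hφunitary : ∀ g : G, φ g ∈ unitary (V →L[ℂ] V))
    (hφirred : ∀ W : Submodule ℂ V, (∀ g : G, ∀ w ∈ W, φ g w ∈ W) → W = ⊥ ∨ W = ⊤)
    -- the character of `φ`
    (χ : G → ℂ) (hχ : ∀ x : G, χ x = LinearMap.trace ℂ V (φ x : V →ₗ[ℂ] V))
    -- a continuous bi-`K`-invariant function `u` and its Fourier transform `û(φ)`
    (u : G → ℂ) (hu : Continuous u)
    (huinv : ∀ k₁ ∈ K, ∀ k₂ ∈ K, ∀ g : G, u (k₁ * g * k₂) = u g)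
    (uhat : V →L[ℂ] V) (huhat : uhat = ∫ x, u x • φ x⁻¹ ∂μ) :
    LinearMap.trace ℂ V (uhat : V →ₗ[ℂ] V) = (∫ x, u x * conj (χ x) ∂μ)
    ∧ uhat ∘L uhat = (LinearMap.trace ℂ V (uhat : V →ₗ[ℂ] V)) • uhat
    ∧ ∀ c : ℂ, c ≠ 0 →
        Module.End.HasEigenvalue (uhat : V →ₗ[ℂ] V) c →
        c = ∫ x, u x * conj (χ x) ∂μ := by
  have : CompleteSpace V := FiniteDimensional.complete ℂ V
  obtain rfl : uhat = fourierOp μ φ u := huhat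
  have hGP : IsGelfandPair μ K := fun f g hf hg hfK hgK => funext (hGelfand f g hf hg hfK hgK)
  have huK (k : G) (hk : k ∈ K) (x : G) : u (x * k) = u x := by
    simpa using huinv 1 K.one_mem k hk x
  have htrace : LinearMap.trace ℂ V (fourierOp μ φ u) = ∫ x, u x * conj (χ x) ∂μ := by
    simp only [hχ, trace_fourierOp hφcont hφunitary hu]
  have hsq := fourierOp_comp_self_eq_trace_smul hφcont hφunitary hφirred hGP hu huK
  refine ⟨htrace, hsq, fun c hc hev => htrace ▸ ?_⟩
  exact LinearMap.eq_of_comp_self_eq_smul_of_hasEigenvalue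
    (congrArg ContinuousLinearMap.toLinearMap hsq) hev hc

theorem fourier_coefficient_of_biinvariant_function_gelfand
    {G : Type*} [Group G] [TopologicalSpace G] [IsTopologicalGroup G] [CompactSpace G]
    [MeasurableSpace G] [BorelSpace G]
    (μ : Measure G) [μ.IsHaarMeasure] [IsProbabilityMeasure μ]
    (K : Subgroup G) (hK : IsClosed (K : Set G))
    -- `(G, K)` is a Gelfand pair: continuous bi-`K`-invariant functions commute under convolution
    (hGelfand : ∀ f g : G → ℂ, Continuous f → Continuous g →
      (∀ k₁ ∈ K, ∀ k₂ ∈ K, ∀ x : G, f (k₁ * x * k₂) = f x) →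
      (∀ k₁ ∈ K, ∀ k₂ ∈ K, ∀ x : G, g (k₁ * x * k₂) = g x) →
      ∀ x : G, (∫ y, f y * g (y⁻¹ * x) ∂μ) = ∫ y, g y * f (y⁻¹ * x) ∂μ)
    {V : Type*} [NormedAddCommGroup V] [InnerProductSpace ℂ V] [FiniteDimensional ℂ V]
    -- a continuous irreducible unitary representation of `G` on `V`
    (φ : G →* (V →L[ℂ] V)) (hφcont : Continuous φ)
    (hφunitary : ∀ g : G, φ g ∈ unitary (V →L[ℂ] V))
    (hφirred : ∀ W : Submodule ℂ V, (∀ g : G, ∀ w ∈ W, φ g w ∈ W) → W = ⊥ ∨ W = ⊤)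
    -- the character of `φ`
    (χ : G → ℂ) (hχ : ∀ x : G, χ x = LinearMap.trace ℂ V (φ x : V →ₗ[ℂ] V))
    -- a continuous bi-`K`-invariant function `u` and its Fourier transform `û(φ)`
    (u : G → ℂ) (hu : Continuous u)
    (huinv : ∀ k₁ ∈ K, ∀ k₂ ∈ K, ∀ g : G, u (k₁ * g * k₂) = u g)
    (uhat : V →L[ℂ] V) (huhat : uhat = ∫ x, u x • φ x⁻¹ ∂μ) :
    LinearMap.trace ℂ V (uhat : V →ₗ[ℂ] V) = (∫ x, u x * conj (χ x) ∂μ)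
    ∧ uhat ∘L uhat = (LinearMap.trace ℂ V (uhat : V →ₗ[ℂ] V)) • uhat
    ∧ ∀ c : ℂ, c ≠ 0 →
        Module.End.HasEigenvalue (uhat : V →ₗ[ℂ] V) c →
        c = ∫ x, u x * conj (χ x) ∂μ :=
  fourier_coefficient_of_biinvariant_function_gelfand_general μ K hGelfand φ hφcont hφunitary
    hφirred χ hχ u hu huinv uhat huhat

end
end

section
/- For an integer n ≥ 1 and each integer 0 ≤ J ≤ n, define λ^{(J)} = (n+1)·((n−1)!)²·(J²+J−n)² / ((n−J)!·(n+1+J)!). Then for every integer 1 ≤ J ≤ n: (i) if J² ≤ n then λ^{(J)} < λ^{(J−1)}; (ii) if n+1 ≤ J² ≤ 3n then λ^{(J)} > λ^{(J−1)}; (iii) if J² ≥ 3n+1 then λ^{(J)} < λ^{(J−1)}. In particular the sequence satisfies λ^{(0)} > λ^{(1)} > ⋯ > λ^{(⌊√n⌋)} < ⋯ < λ^{(⌊√(3n)⌋)} > ⋯ > λ^{(n)}. -/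
/-- The eigenvalues of the Berezin transform for the second-highest weight vector:
`λ⁽ᴶ⁾ = (n+1)·((n−1)!)²·(J²+J−n)² / ((n−J)!·(n+1+J)!)`. -/
noncomputable def lamSH (n J : ℕ) : ℝ :=
  ((n : ℝ) + 1) * (((n - 1).factorial : ℝ)) ^ 2 * ((J : ℝ) ^ 2 + (J : ℝ) - (n : ℝ)) ^ 2 /
    (((n - J).factorial : ℝ) * ((n + 1 + J).factorial : ℝ))

lemma lamSH_core (n J : ℕ) (h1 : 1 ≤ J) (h2 : J ≤ n) :
    lamSH n J < lamSH n (J-1) ↔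
    ((J:ℝ)^2+(J:ℝ)-(n:ℝ))^2*((n:ℝ)-(J:ℝ)+1) <
      ((J:ℝ)^2-(J:ℝ)-(n:ℝ))^2*((n:ℝ)+1+(J:ℝ)) := by
  have e1 : n - (J-1) = (n-J)+1 := by omega
  have e2 : n + 1 + (J-1) = n + J := by omega
  have e3 : n + 1 + J = (n + J) + 1 := by omega
  have ha : (0:ℝ) < ((n-J).factorial : ℝ) := by exact_mod_cast Nat.factorial_pos _
  have hb : (0:ℝ) < ((n+J).factorial : ℝ) := by exact_mod_cast Nat.factorial_pos _
  have hc : (0:ℝ) < ((n:ℝ)+1)*(((n-1).factorial:ℝ))^2 := by positivity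
  have hJn : (J:ℝ) ≤ (n:ℝ) := by exact_mod_cast h2
  have hJcast : ((J-1:ℕ):ℝ) = (J:ℝ)-1 := by
    have := Nat.cast_sub h1 (R := ℝ); simpa using this
  have hnJcast : ((n-J:ℕ):ℝ) = (n:ℝ)-(J:ℝ) := by
    exact_mod_cast Nat.cast_sub h2 (R := ℝ)
  unfold lamSH
  rw [e1, e2, e3, Nat.factorial_succ, Nat.factorial_succ, hJcast]
  push_cast
  rw [div_lt_div_iff₀ (by positivity) (by positivity)]
  rw [hnJcast]
  have hpos : (0:ℝ) < (((n:ℝ)+1)*(((n-1).factorial:ℝ))^2) * (((n-J).factorial:ℝ) * ((n+J).factorial:ℝ)) := by positivity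
  constructor <;> intro h <;> nlinarith [h, hpos, mul_lt_mul_of_pos_right h hpos]


lemma case1 (n J : ℕ) (h1 : 1 ≤ J) (h2 : J ≤ n) (h : J^2 ≤ n) :
    lamSH n J < lamSH n (J-1) := by
  rw [lamSH_core n J h1 h2]
  have hJ : (1:ℝ) ≤ (J:ℝ) := by exact_mod_cast h1
  have hA : (J:ℝ)^2 ≤ (n:ℝ) := by exact_mod_cast h
  nlinarith [sq_nonneg ((J:ℝ)^2-(n:ℝ)), mul_nonneg (by linarith : (0:ℝ) ≤ (J:ℝ)) (sq_nonneg ((J:ℝ)^2-(n:ℝ))),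
    mul_nonneg (mul_nonneg (by linarith : (0:ℝ) ≤ (J:ℝ)) (by positivity : (0:ℝ) ≤ (n:ℝ)+1)) (by linarith : (0:ℝ) ≤ (n:ℝ)-(J:ℝ)^2),
    mul_le_mul hJ hJ (by linarith) (by linarith)]

lemma lamSH_core' (n J : ℕ) (h1 : 1 ≤ J) (h2 : J ≤ n) :
    lamSH n (J-1) < lamSH n J ↔
    ((J:ℝ)^2-(J:ℝ)-(n:ℝ))^2*((n:ℝ)+1+(J:ℝ)) <
      ((J:ℝ)^2+(J:ℝ)-(n:ℝ))^2*((n:ℝ)-(J:ℝ)+1) := by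
  have e1 : n - (J-1) = (n-J)+1 := by omega
  have e2 : n + 1 + (J-1) = n + J := by omega
  have e3 : n + 1 + J = (n + J) + 1 := by omega
  have ha : (0:ℝ) < ((n-J).factorial : ℝ) := by exact_mod_cast Nat.factorial_pos _
  have hb : (0:ℝ) < ((n+J).factorial : ℝ) := by exact_mod_cast Nat.factorial_pos _
  have hc : (0:ℝ) < ((n:ℝ)+1)*(((n-1).factorial:ℝ))^2 := by positivity
  have hJn : (J:ℝ) ≤ (n:ℝ) := by exact_mod_cast h2
  have hJcast : ((J-1:ℕ):ℝ) = (J:ℝ)-1 := by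
    have := Nat.cast_sub h1 (R := ℝ); simpa using this
  have hnJcast : ((n-J:ℕ):ℝ) = (n:ℝ)-(J:ℝ) := by
    exact_mod_cast Nat.cast_sub h2 (R := ℝ)
  unfold lamSH
  rw [e1, e2, e3, Nat.factorial_succ, Nat.factorial_succ, hJcast]
  push_cast
  rw [div_lt_div_iff₀ (by positivity) (by positivity)]
  rw [hnJcast]
  have hpos : (0:ℝ) < (((n:ℝ)+1)*(((n-1).factorial:ℝ))^2) * (((n-J).factorial:ℝ) * ((n+J).factorial:ℝ)) := by positivity
  constructor <;> intro h <;> nlinarith [h, hpos, mul_lt_mul_of_pos_right h hpos]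


lemma case2 (n J : ℕ) (h1 : 1 ≤ J) (h2 : J ≤ n) (hlo : n + 1 ≤ J^2) (hhi : J^2 ≤ 3*n) :
    lamSH n (J-1) < lamSH n J := by
  rw [lamSH_core' n J h1 h2]
  have hJ : (1:ℝ) ≤ (J:ℝ) := by exact_mod_cast h1
  have hA1 : (n:ℝ) + 1 ≤ (J:ℝ)^2 := by exact_mod_cast hlo
  have hA2 : (J:ℝ)^2 ≤ 3*(n:ℝ) := by exact_mod_cast hhi
  have hn : (1:ℝ) ≤ (n:ℝ) := by exact_mod_cast (show 1 ≤ n by omega)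
  nlinarith [mul_nonneg (by linarith : (0:ℝ) ≤ (J:ℝ)^2-(n:ℝ)-1) (by linarith : (0:ℝ) ≤ 2*(n:ℝ)-((J:ℝ)^2-(n:ℝ))),
    mul_nonneg (mul_nonneg (by linarith : (0:ℝ) ≤ (J:ℝ)) (by linarith : (0:ℝ) ≤ (J:ℝ)^2-(n:ℝ)-1)) (by linarith : (0:ℝ) ≤ 2*(n:ℝ)-((J:ℝ)^2-(n:ℝ))),
    mul_le_mul_of_nonneg_left hn (by linarith : (0:ℝ) ≤ (J:ℝ))]

lemma case3 (n J : ℕ) (h1 : 1 ≤ J) (h2 : J ≤ n) (h : 3*n + 1 ≤ J^2) :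
    lamSH n J < lamSH n (J-1) := by
  rw [lamSH_core n J h1 h2]
  have hJ : (1:ℝ) ≤ (J:ℝ) := by exact_mod_cast h1
  have hA : 3*(n:ℝ) + 1 ≤ (J:ℝ)^2 := by exact_mod_cast h
  have hn : (1:ℝ) ≤ (n:ℝ) := by exact_mod_cast (Nat.one_le_iff_ne_zero.mpr (by omega) : 1 ≤ n)
  nlinarith [mul_nonneg (by nlinarith : (0:ℝ) ≤ (J:ℝ)^2-(n:ℝ)) (by linarith : (0:ℝ) ≤ (J:ℝ)^2-(n:ℝ)-(2*(n:ℝ)+1)),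
    mul_nonneg (mul_nonneg (by linarith : (0:ℝ) ≤ (J:ℝ)) (by nlinarith : (0:ℝ) ≤ (J:ℝ)^2-(n:ℝ))) (by linarith : (0:ℝ) ≤ (J:ℝ)^2-(n:ℝ)-(2*(n:ℝ)+1)),
    mul_le_mul_of_nonneg_left hn (by linarith : (0:ℝ) ≤ (J:ℝ))]

theorem lamSH_unimodal (n : ℕ) (hn : 1 ≤ n) :
    (∀ J : ℕ, 1 ≤ J → J ≤ n →
      (J ^ 2 ≤ n → lamSH n J < lamSH n (J - 1))
      ∧ (n + 1 ≤ J ^ 2 → J ^ 2 ≤ 3 * n → lamSH n (J - 1) < lamSH n J)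
      ∧ (3 * n + 1 ≤ J ^ 2 → lamSH n J < lamSH n (J - 1)))
    ∧ (∀ J : ℕ, 1 ≤ J → J ≤ Nat.sqrt n → lamSH n J < lamSH n (J - 1))
    ∧ (∀ J : ℕ, Nat.sqrt n < J → J ≤ Nat.sqrt (3 * n) → lamSH n (J - 1) < lamSH n J)
    ∧ (∀ J : ℕ, Nat.sqrt (3 * n) < J → J ≤ n → lamSH n J < lamSH n (J - 1)) := by
  have hs3 : Nat.sqrt (3 * n) ≤ n := by
    have h' : Nat.sqrt (3 * n) < n + 1 := Nat.sqrt_lt'.mpr (by nlinarith)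
    omega
  refine ⟨fun J h1 h2 => ⟨fun h => case1 n J h1 h2 h, fun hlo hhi => case2 n J h1 h2 hlo hhi,
      fun h => case3 n J h1 h2 h⟩, ?_, ?_, ?_⟩
  · intro J h1 hJ
    exact case1 n J h1 (hJ.trans (Nat.sqrt_le_self n)) (Nat.le_sqrt'.mp hJ)
  · intro J hlo hhi
    have h1 : 1 ≤ J := by omega
    have hl : n < J ^ 2 := Nat.sqrt_lt'.mp hlo
    exact case2 n J h1 (hhi.trans hs3) (by omega) (Nat.le_sqrt'.mp hhi)
  · intro J hlo h2
    have hl : 3 * n < J ^ 2 := Nat.sqrt_lt'.mp hlo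
    exact case3 n J (by omega) h2 (by omega)
end

section
/- For an integer n ≥ 5 and each integer 0 ≤ J ≤ n, define λ^{(J)} = (n+1)·((n−1)!)²·(J²+J−n)² / ((n−J)!·(n+1+J)!). Then λ^{(1)} > λ^{(J)} for every integer 2 ≤ J ≤ n. Moreover λ^{(1)} = (n−2)²/(n(n+2)), so that 1 − λ^{(1)} = 6/n − 16/(n(n+2)) (equivalently, with j = n/2, the spectral gap is γ(B_{j,j−1}) = 1 − (j−1)²/(j(j+1)) = 3/j − 4/(j(j+1))). -/
/-- one strict step for the factorial product. -/
private lemma factStep (n K : ℕ) (hK : K < n) :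
    (n - K).factorial * (n + 1 + K).factorial
      < (n - (K + 1)).factorial * (n + 1 + (K + 1)).factorial := by
  have h1 : n - K = (n - (K + 1)) + 1 := by omega
  have h2 : n + 1 + (K + 1) = (n + 1 + K) + 1 := by omega
  rw [h1, Nat.factorial_succ, h2, Nat.factorial_succ]
  have hp1 := Nat.factorial_pos (n - (K + 1))
  have hp2 := Nat.factorial_pos (n + 1 + K)
  have hlt : n - (K + 1) + 1 < n + 1 + K + 1 := by omega
  calc (n - (K + 1) + 1) * (n - (K + 1)).factorial * (n + 1 + K).factorial
      < (n + 1 + K + 1) * (n - (K + 1)).factorial * (n + 1 + K).factorial := by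
        have := Nat.factorial_pos (n - (K+1))
        have := Nat.factorial_pos (n + 1 + K)
        exact Nat.mul_lt_mul_of_lt_of_le (Nat.mul_lt_mul_of_lt_of_le hlt (le_refl _) hp1) (le_refl _) hp2
    _ = (n - (K + 1)).factorial * ((n + 1 + K + 1) * (n + 1 + K).factorial) := by ring

private lemma factIneq (n : ℕ) : ∀ J, 2 ≤ J → J ≤ n →
    (n - 1).factorial * (n + 2).factorial
      < (n - J).factorial * (n + 1 + J).factorial := by
  intro J hJ2
  induction J, hJ2 using Nat.le_induction with
  | base =>
    intro h2n
    have := factStep n 1 (by omega)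
    simpa using this
  | succ J hJ ih =>
    intro hJn
    exact lt_trans (ih (by omega)) (factStep n J (by omega))

/-- second-order product lower bound `P(J) ≥ 1 + (s-2)/n + (s-2)(s-2J-2)/(2n²)`. -/
private lemma P2 (n : ℕ) : ∀ J, 1 ≤ J → J ≤ n →
    (2 * (n : ℤ) ^ 2 + 2 * n * ((J : ℤ) ^ 2 + J - 2)
        + ((J : ℤ) ^ 2 + J - 2) * ((J : ℤ) ^ 2 + J - 2 * J - 2))
        * (((n - 1).factorial * (n + 2).factorial : ℕ) : ℤ)
      ≤ 2 * (n : ℤ) ^ 2 * (((n - J).factorial * (n + 1 + J).factorial : ℕ) : ℤ) := by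
  intro J hJ1
  induction J, hJ1 using Nat.le_induction with
  | base =>
    intro h1n
    have h1 : n - 1 = n - 1 := rfl
    have h2 : n + 1 + 1 = n + 2 := by omega
    rw [h2]
    apply le_of_eq
    push_cast
    try ring
  | succ J hJ ih =>
    intro hJn
    have hJn' : J ≤ n := by omega
    have ih' := ih hJn'
    -- factorial recursions
    have e1 : (n - J).factorial = (n - J) * (n - (J + 1)).factorial := by
      have : n - J = (n - (J + 1)) + 1 := by omega
      rw [this, Nat.factorial_succ]
    have e2 : (n + 1 + (J + 1)).factorial = (n + 2 + J) * (n + 1 + J).factorial := by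
      have : n + 1 + (J + 1) = (n + 1 + J) + 1 := by omega
      rw [this, Nat.factorial_succ]
      congr 1
      omega
    set X : ℤ := (((n - 1).factorial * (n + 2).factorial : ℕ) : ℤ) with hX
    set Y : ℤ := (((n - (J + 1)).factorial * (n + 1 + J).factorial : ℕ) : ℤ) with hY
    have hYnn : (0 : ℤ) ≤ Y := by positivity
    have hXnn : (0 : ℤ) ≤ X := by positivity
    have hcast1 : (((n - J).factorial * (n + 1 + J).factorial : ℕ) : ℤ)
        = ((n : ℤ) - J) * Y := by
      rw [e1, hY]
      push_cast [Nat.cast_sub hJn']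
      ring
    have hcast2 : (((n - (J + 1)).factorial * (n + 1 + (J + 1)).factorial : ℕ) : ℤ)
        = ((n : ℤ) + 2 + J) * Y := by
      rw [e2, hY]
      push_cast
      ring
    rw [hcast2]
    rw [hcast1] at ih'
    -- polynomial step inequality
    have hstep : (2 * (n : ℤ) ^ 2 + 2 * n * (((J : ℤ) + 1) ^ 2 + (J + 1) - 2)
          + (((J : ℤ) + 1) ^ 2 + (J + 1) - 2) * (((J : ℤ) + 1) ^ 2 + (J + 1) - 2 * (J + 1) - 2))
          * ((n : ℤ) - J)
        ≤ (2 * (n : ℤ) ^ 2 + 2 * n * ((J : ℤ) ^ 2 + J - 2)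
          + ((J : ℤ) ^ 2 + J - 2) * ((J : ℤ) ^ 2 + J - 2 * J - 2)) * ((n : ℤ) + 2 + J) := by
      have hJ1' : (1 : ℤ) ≤ (J : ℤ) := by exact_mod_cast hJ
      have hnJ : (J : ℤ) + 1 ≤ (n : ℤ) := by exact_mod_cast hJn
      nlinarith [mul_nonneg (sub_nonneg.2 hJ1') (sub_nonneg.2 hJ1'),
        mul_nonneg (mul_nonneg (sub_nonneg.2 hJ1') (sub_nonneg.2 hJ1')) (sub_nonneg.2 hJ1'),
        sq_nonneg ((J : ℤ) - 1), sq_nonneg ((J : ℤ) + 1),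
        mul_nonneg (sub_nonneg.2 hnJ) (sq_nonneg ((J : ℤ) - 1)),
        mul_nonneg (sub_nonneg.2 hnJ) (sq_nonneg ((J : ℤ) + 1))]
    have hnJpos : (0 : ℤ) < (n : ℤ) - J := by
      have : (J : ℤ) + 1 ≤ (n : ℤ) := by exact_mod_cast hJn
      linarith
    -- combine
    have h4 : (2 * (n : ℤ) ^ 2 + 2 * n * (((J : ℤ) + 1) ^ 2 + (J + 1) - 2)
          + (((J : ℤ) + 1) ^ 2 + (J + 1) - 2) * (((J : ℤ) + 1) ^ 2 + (J + 1) - 2 * (J + 1) - 2))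
          * X * ((n : ℤ) - J)
        ≤ 2 * (n : ℤ) ^ 2 * (((n : ℤ) + 2 + J) * Y) * ((n : ℤ) - J) := by
      calc (2 * (n : ℤ) ^ 2 + 2 * n * (((J : ℤ) + 1) ^ 2 + (J + 1) - 2)
          + (((J : ℤ) + 1) ^ 2 + (J + 1) - 2) * (((J : ℤ) + 1) ^ 2 + (J + 1) - 2 * (J + 1) - 2))
          * X * ((n : ℤ) - J)
          = ((2 * (n : ℤ) ^ 2 + 2 * n * (((J : ℤ) + 1) ^ 2 + (J + 1) - 2)
          + (((J : ℤ) + 1) ^ 2 + (J + 1) - 2) * (((J : ℤ) + 1) ^ 2 + (J + 1) - 2 * (J + 1) - 2))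
          * ((n : ℤ) - J)) * X := by ring
        _ ≤ ((2 * (n : ℤ) ^ 2 + 2 * n * ((J : ℤ) ^ 2 + J - 2)
          + ((J : ℤ) ^ 2 + J - 2) * ((J : ℤ) ^ 2 + J - 2 * J - 2)) * ((n : ℤ) + 2 + J)) * X :=
            mul_le_mul_of_nonneg_right hstep hXnn
        _ = ((2 * (n : ℤ) ^ 2 + 2 * n * ((J : ℤ) ^ 2 + J - 2)
          + ((J : ℤ) ^ 2 + J - 2) * ((J : ℤ) ^ 2 + J - 2 * J - 2)) * X) * ((n : ℤ) + 2 + J) := by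
            ring
        _ ≤ (2 * (n : ℤ) ^ 2 * (((n : ℤ) - J) * Y)) * ((n : ℤ) + 2 + J) := by
            apply mul_le_mul_of_nonneg_right ih'
            positivity
        _ = 2 * (n : ℤ) ^ 2 * (((n : ℤ) + 2 + J) * Y) * ((n : ℤ) - J) := by ring
    have := le_of_mul_le_mul_right (by
      calc (2 * (n : ℤ) ^ 2 + 2 * n * (((J : ℤ) + 1) ^ 2 + (J + 1) - 2)
          + (((J : ℤ) + 1) ^ 2 + (J + 1) - 2) * (((J : ℤ) + 1) ^ 2 + (J + 1) - 2 * (J + 1) - 2))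
          * X * ((n : ℤ) - J)
          ≤ 2 * (n : ℤ) ^ 2 * (((n : ℤ) + 2 + J) * Y) * ((n : ℤ) - J) := h4) hnJpos
    push_cast at this ⊢
    linarith

set_option maxHeartbeats 1000000 in
private lemma key (n : ℕ) (hn : 17 ≤ n) : ∀ J, 2 ≤ J → J ≤ n →
    ((J : ℤ) ^ 2 + J - n) ^ 2 * (((n - 1).factorial * (n + 2).factorial : ℕ) : ℤ)
      < ((n : ℤ) - 2) ^ 2 * (((n - J).factorial * (n + 1 + J).factorial : ℕ) : ℤ) := by
  have hnZ : (17 : ℤ) ≤ (n : ℤ) := by exact_mod_cast hn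
  have hn2 : (0 : ℤ) < (n : ℤ) - 2 := by linarith
  intro J
  induction J using Nat.strong_induction_on with
  | _ J ih =>
    intro hJ2 hJn
    have hJ2Z : (2 : ℤ) ≤ (J : ℤ) := by exact_mod_cast hJ2
    have hJnZ : (J : ℤ) ≤ (n : ℤ) := by exact_mod_cast hJn
    have hXpos : (0 : ℤ) < (((n - 1).factorial * (n + 2).factorial : ℕ) : ℤ) := by
      have := Nat.factorial_pos (n - 1)
      have := Nat.factorial_pos (n + 2)
      positivity
    by_cases ha : J ^ 2 + J + 2 ≤ 2 * n
    · -- region (a) : |J²+J−n| ≤ n−2, factorial product strictly grows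
      have haZ : (J : ℤ) ^ 2 + J + 2 ≤ 2 * n := by exact_mod_cast ha
      have h1 : ((J : ℤ) ^ 2 + J - n) ^ 2 ≤ ((n : ℤ) - 2) ^ 2 := by
        apply sq_le_sq'
        · nlinarith
        · linarith
      have h2 : (((n - 1).factorial * (n + 2).factorial : ℕ) : ℤ)
          < (((n - J).factorial * (n + 1 + J).factorial : ℕ) : ℤ) := by
        exact_mod_cast factIneq n J hJ2 hJn
      calc ((J : ℤ) ^ 2 + J - n) ^ 2 * (((n - 1).factorial * (n + 2).factorial : ℕ) : ℤ)
          ≤ ((n : ℤ) - 2) ^ 2 * (((n - 1).factorial * (n + 2).factorial : ℕ) : ℤ) :=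
            mul_le_mul_of_nonneg_right h1 hXpos.le
        _ < ((n : ℤ) - 2) ^ 2 * (((n - J).factorial * (n + 1 + J).factorial : ℕ) : ℤ) := by
            apply mul_lt_mul_of_pos_left h2
            positivity
    · by_cases hb : J ^ 2 ≤ 3 * n + 1
      · -- region (b) : use the second order bound P2
        have hJ5 : 5 ≤ J := by
          by_contra h
          push_neg at h
          interval_cases J <;> omega
        have hJ5Z : (5 : ℤ) ≤ (J : ℤ) := by exact_mod_cast hJ5
        have haZ : 2 * (n : ℤ) ≤ (J : ℤ) ^ 2 + J + 1 := by
          have : 2 * n + 1 ≤ J ^ 2 + J + 2 := by omega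
          exact_mod_cast (by omega : 2 * n ≤ J ^ 2 + J + 1)
        have hbZ : (J : ℤ) ^ 2 ≤ 3 * n + 1 := by exact_mod_cast hb
        have hJn9 : (J : ℤ) + 9 ≤ (n : ℤ) := by nlinarith
        have hP := P2 n J (by omega) hJn
        have hpoly : 2 * (n : ℤ) ^ 2 * ((J : ℤ) ^ 2 + J - n) ^ 2
            < ((n : ℤ) - 2) ^ 2 * (2 * (n : ℤ) ^ 2 + 2 * n * ((J : ℤ) ^ 2 + J - 2)
              + ((J : ℤ) ^ 2 + J - 2) * ((J : ℤ) ^ 2 + J - 2 * J - 2)) := by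
          have hw : (0 : ℤ) < (J : ℤ) ^ 2 + J - 2 := by nlinarith
          have hB : (0 : ℤ) < 2 * (n : ℤ) * ((n : ℤ) - 2) ^ 2 + 4 * (n : ℤ) ^ 2 * ((n : ℤ) - 2)
              - 2 * (J : ℤ) * ((n : ℤ) - 2) ^ 2
              - ((J : ℤ) ^ 2 + J - 2) * (2 * (n : ℤ) ^ 2 - ((n : ℤ) - 2) ^ 2) := by
            nlinarith [mul_nonneg (sub_nonneg.2 hJn9) (sq_nonneg (n : ℤ)),
              mul_nonneg (sub_nonneg.2 hbZ) (sq_nonneg (n : ℤ)),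
              mul_nonneg (sub_nonneg.2 hJn9) (mul_nonneg (by linarith : (0:ℤ) ≤ (n:ℤ)) (by linarith : (0:ℤ) ≤ (n:ℤ)))]
          nlinarith [mul_pos hw hB]
        set X : ℤ := (((n - 1).factorial * (n + 2).factorial : ℕ) : ℤ) with hX
        set Y : ℤ := (((n - J).factorial * (n + 1 + J).factorial : ℕ) : ℤ) with hY
        set F : ℤ := 2 * (n : ℤ) ^ 2 + 2 * n * ((J : ℤ) ^ 2 + J - 2)
              + ((J : ℤ) ^ 2 + J - 2) * ((J : ℤ) ^ 2 + J - 2 * J - 2) with hF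
        have h2n2 : (0 : ℤ) < 2 * (n : ℤ) ^ 2 := by positivity
        have hmain : (2 * (n : ℤ) ^ 2) * (((J : ℤ) ^ 2 + J - n) ^ 2 * X)
            < (2 * (n : ℤ) ^ 2) * (((n : ℤ) - 2) ^ 2 * Y) := by
          calc (2 * (n : ℤ) ^ 2) * (((J : ℤ) ^ 2 + J - n) ^ 2 * X)
              = (2 * (n : ℤ) ^ 2 * ((J : ℤ) ^ 2 + J - n) ^ 2) * X := by ring
            _ < (((n : ℤ) - 2) ^ 2 * F) * X :=
                mul_lt_mul_of_pos_right hpoly hXpos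
            _ = ((n : ℤ) - 2) ^ 2 * (F * X) := by ring
            _ ≤ ((n : ℤ) - 2) ^ 2 * (2 * (n : ℤ) ^ 2 * Y) := by
                apply mul_le_mul_of_nonneg_left hP
                positivity
            _ = (2 * (n : ℤ) ^ 2) * (((n : ℤ) - 2) ^ 2 * Y) := by ring
        exact lt_of_mul_lt_mul_left hmain h2n2.le
      · -- region (c) : induction step from J-1
        have hJ3 : 3 ≤ J := by
          by_contra h
          push_neg at h
          interval_cases J <;> omega
        obtain ⟨K, rfl⟩ : ∃ K, J = K + 1 := ⟨J - 1, by omega⟩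
        have hprev := ih K (by omega) (by omega) (by omega)
        have hKnZ : (K : ℤ) + 1 ≤ (n : ℤ) := by exact_mod_cast hJn
        have hc : 3 * (n : ℤ) + 2 ≤ ((K : ℤ) + 1) ^ 2 := by
          have : 3 * n + 2 ≤ (K + 1) ^ 2 := by omega
          exact_mod_cast this
        -- the step inequality
        have hge : 2 * ((n : ℤ) - K) + (K + 1) ≤ (K : ℤ) ^ 2 + K - n := by nlinarith
        have hstep : (((K : ℤ) + 1) ^ 2 + ((K : ℤ) + 1) - n) ^ 2 * ((n : ℤ) - K)
            ≤ ((K : ℤ) ^ 2 + K - n) ^ 2 * ((n : ℤ) + 2 + K) := by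
          have hm : (1 : ℤ) ≤ (n : ℤ) - K := by linarith
          have h1 : (0 : ℤ) ≤ (K : ℤ) ^ 2 + K - n - 2 * ((n : ℤ) - K) - (K + 1) := by linarith
          have h2 : (0 : ℤ) ≤ (K : ℤ) ^ 2 + K - n + (K + 1) := by linarith
          nlinarith [mul_nonneg h1 h2, sq_nonneg ((K : ℤ) + 1),
            mul_nonneg (mul_nonneg h1 h2) (by linarith : (0 : ℤ) ≤ (K : ℤ) + 1)]
        -- factorial recursions
        have e1 : (n - K).factorial = (n - K) * (n - (K + 1)).factorial := by
          have h : n - K = (n - (K + 1)) + 1 := by omega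
          rw [h, Nat.factorial_succ]
        have e2 : (n + 1 + (K + 1)).factorial = (n + 2 + K) * (n + 1 + K).factorial := by
          have h : n + 1 + (K + 1) = (n + 1 + K) + 1 := by omega
          rw [h, Nat.factorial_succ]
          congr 1
          omega
        set X : ℤ := (((n - 1).factorial * (n + 2).factorial : ℕ) : ℤ) with hX
        set Z : ℤ := (((n - (K + 1)).factorial * (n + 1 + K).factorial : ℕ) : ℤ) with hZ
        have hZpos : (0 : ℤ) < Z := by
          have := Nat.factorial_pos (n - (K + 1))
          have := Nat.factorial_pos (n + 1 + K)
          positivity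
        have hcast1 : (((n - K).factorial * (n + 1 + K).factorial : ℕ) : ℤ)
            = ((n : ℤ) - K) * Z := by
          rw [e1, hZ]
          push_cast [Nat.cast_sub (by omega : K ≤ n)]
          ring
        have hcast2 : (((n - (K + 1)).factorial * (n + 1 + (K + 1)).factorial : ℕ) : ℤ)
            = ((n : ℤ) + 2 + K) * Z := by
          rw [e2, hZ]
          push_cast
          ring
        rw [hcast2]
        rw [hcast1] at hprev
        have hnK : (0 : ℤ) < (n : ℤ) - K := by linarith
        have hmain : (((K : ℤ) + 1) ^ 2 + ((K : ℤ) + 1) - n) ^ 2 * X * ((n : ℤ) - K)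
            < ((n : ℤ) - 2) ^ 2 * (((n : ℤ) + 2 + K) * Z) * ((n : ℤ) - K) := by
          calc (((K : ℤ) + 1) ^ 2 + ((K : ℤ) + 1) - n) ^ 2 * X * ((n : ℤ) - K)
              = ((((K : ℤ) + 1) ^ 2 + ((K : ℤ) + 1) - n) ^ 2 * ((n : ℤ) - K)) * X := by ring
            _ ≤ (((K : ℤ) ^ 2 + K - n) ^ 2 * ((n : ℤ) + 2 + K)) * X :=
                mul_le_mul_of_nonneg_right hstep hXpos.le
            _ = (((K : ℤ) ^ 2 + K - n) ^ 2 * X) * ((n : ℤ) + 2 + K) := by ring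
            _ < (((n : ℤ) - 2) ^ 2 * (((n : ℤ) - K) * Z)) * ((n : ℤ) + 2 + K) := by
                apply mul_lt_mul_of_pos_right hprev
                linarith
            _ = ((n : ℤ) - 2) ^ 2 * (((n : ℤ) + 2 + K) * Z) * ((n : ℤ) - K) := by ring
        have goal := lt_of_mul_lt_mul_right hmain hnK.le
        exact_mod_cast goal

set_option maxHeartbeats 2000000 in
private lemma keyAll (n J : ℕ) (hn : 5 ≤ n) (hJ2 : 2 ≤ J) (hJn : J ≤ n) :
    ((J : ℤ) ^ 2 + J - n) ^ 2 * (((n - 1).factorial * (n + 2).factorial : ℕ) : ℤ)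
      < ((n : ℤ) - 2) ^ 2 * (((n - J).factorial * (n + 1 + J).factorial : ℕ) : ℤ) := by
  by_cases h : 17 ≤ n
  · exact key n h J hJ2 hJn
  · have hn16 : n ≤ 16 := by omega
    interval_cases n <;> interval_cases J <;> norm_num [Nat.factorial]

private lemma lam1 (n : ℕ) (hn : 5 ≤ n) :
    lamSH n 1 = ((n : ℝ) - 2) ^ 2 / ((n : ℝ) * ((n : ℝ) + 2)) := by
  obtain ⟨m, rfl⟩ : ∃ m, n = m + 5 := ⟨n - 5, by omega⟩
  have e1 : m + 5 - 1 = m + 4 := by omega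
  have e2 : m + 5 + 1 + 1 = m + 7 := by omega
  have e3 : (m + 7).factorial = (m + 7) * ((m + 6) * ((m + 5) * (m + 4).factorial)) := by
    rw [show m + 7 = (m + 6) + 1 from rfl, Nat.factorial_succ,
      show m + 6 = (m + 5) + 1 from rfl, Nat.factorial_succ,
      show m + 5 = (m + 4) + 1 from rfl, Nat.factorial_succ]
  have hfpos : (0 : ℝ) < ((m + 4).factorial : ℝ) := by
    exact_mod_cast (m + 4).factorial_pos
  simp only [lamSH, e1, e2, e3]
  have h1 : ((m : ℝ) + 5) ≠ 0 := by positivity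
  have h2 : ((m : ℝ) + 6) ≠ 0 := by positivity
  have h3 : ((m : ℝ) + 7) ≠ 0 := by positivity
  have h4 : (((m + 4).factorial : ℝ)) ≠ 0 := ne_of_gt hfpos
  push_cast
  field_simp
  ring

theorem lamSH_one_is_max_and_gap (n : ℕ) (hn : 5 ≤ n) :
    (∀ J : ℕ, 2 ≤ J → J ≤ n → lamSH n J < lamSH n 1)
    ∧ lamSH n 1 = ((n : ℝ) - 2) ^ 2 / ((n : ℝ) * ((n : ℝ) + 2))
    ∧ 1 - lamSH n 1 = 6 / (n : ℝ) - 16 / ((n : ℝ) * ((n : ℝ) + 2)) := by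
  have hl1 := lam1 n hn
  refine ⟨?_, hl1, ?_⟩
  · intro J hJ2 hJn
    have hkey := keyAll n J hn hJ2 hJn
    have hR : ((J : ℝ) ^ 2 + J - n) ^ 2 * (((n - 1).factorial : ℝ) * ((n + 2).factorial : ℝ))
        < ((n : ℝ) - 2) ^ 2 * (((n - J).factorial : ℝ) * ((n + 1 + J).factorial : ℝ)) := by
      have := hkey
      push_cast at this
      exact_mod_cast this
    have h112 : n + 1 + 1 = n + 2 := by omega
    simp only [lamSH, h112]
    rw [div_lt_div_iff₀ (by positivity) (by positivity)]
    have hc : (0 : ℝ) < ((n : ℝ) + 1) * (((n - 1).factorial : ℝ)) ^ 2 := by positivity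
    have hmul := mul_lt_mul_of_pos_left hR hc
    push_cast
    nlinarith [hmul]
  · rw [hl1]
    have h1 : ((n : ℝ)) ≠ 0 := by positivity
    have h2 : ((n : ℝ) + 2) ≠ 0 := by positivity
    field_simp
    ring
end

section
/- For an integer n ≥ 27 and each integer 0 ≤ J ≤ n, define λ^{(J)} = (n+1)·((n−1)!)²·(J²+J−n)² / ((n−J)!·(n+1+J)!). Then λ^{(⌊√(3n)⌋)} ≤ exp( −3·(1 − 1/√(3n)) / (1 + √3/√n + 1/n) ) · (2 + √(3/n))². -/
open Finset

private lemma fact_add_desc (a b : ℕ) :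
    (a + b).factorial = a.factorial * ∏ k ∈ Finset.range b, (a + b - k) := by
  induction b with
  | zero => simp
  | succ b ih =>
    rw [show a + (b+1) = (a+b)+1 by ring, Nat.factorial_succ, ih, Finset.prod_range_succ']
    have h1 : ∀ k ∈ Finset.range b, a + b + 1 - (k + 1) = a + b - k := fun k _ => by omega
    rw [Finset.prod_congr rfl h1, Nat.sub_zero]
    ring

private lemma lamSH_core_s14 (N s Jr : ℝ) (hN27 : 27 ≤ N) (hs0 : 0 ≤ s) (hs2 : s ^ 2 = 3 * N)
    (hJr9 : 9 ≤ Jr) (hJrs : Jr ≤ s) (hsJ : s < Jr + 1) :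
    (Jr ^ 2 + Jr - N) ^ 2 / (N * (N + Jr + 1))
      ≤ (1 + (Jr ^ 2 - 1 - 3 * N + s) / (N + s + 1)) * ((2 * N + s) / N) ^ 2 := by
  have hN0 : (0:ℝ) < N := by linarith
  have hs9 : (9:ℝ) ≤ s := by nlinarith
  have hsN : s ≤ N := by nlinarith
  have hD0 : (0:ℝ) < N + s + 1 := by linarith
  have hd0 : (0:ℝ) ≤ s ^ 2 - Jr ^ 2 := by nlinarith
  have hd2 : s ^ 2 - Jr ^ 2 ≤ 2 * s - 1 := by nlinarith
  have hM0 : (0:ℝ) ≤ Jr ^ 2 + Jr - N := by nlinarith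
  have hc : (0:ℝ) ≤ Jr ^ 2 + 2 * s - 2 * N := by nlinarith
  have h1 : (Jr ^ 2 + Jr - N) ^ 2 ≤ (Jr ^ 2 + s - N) ^ 2 := by nlinarith
  have hid : (Jr^2 + 2*s - 2*N) * (2*N + s)^2 - (Jr^2 + s - N)^2 * (N + s + 1)
      = (2*s - (s^2 - Jr^2)) * (s^2 - Jr^2) * (N + s + 1) + (s^2 - Jr^2) * N
        + (s - 1) * (2*N + s)^2 := by
    linear_combination (s^3 - s^2 + N*s^2 - 2*s + N*s - 2*s*Jr^2 - Jr^2 - N - 2*N*Jr^2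
      + 3*N^2) * hs2
  have h2 : (Jr ^ 2 + s - N) ^ 2 * (N + s + 1) ≤ (Jr ^ 2 + 2 * s - 2 * N) * (2 * N + s) ^ 2 := by
    nlinarith [mul_nonneg (mul_nonneg (by linarith : (0:ℝ) ≤ 2*s - (s^2 - Jr^2)) hd0) hD0.le,
      mul_nonneg hd0 hN0.le,
      mul_nonneg (by linarith : (0:ℝ) ≤ s - 1) (sq_nonneg (2*N + s)), hid]
  have e : (1 + (Jr ^ 2 - 1 - 3 * N + s) / (N + s + 1)) * ((2 * N + s) / N) ^ 2
      = ((Jr ^ 2 + 2 * s - 2 * N) * (2 * N + s) ^ 2) / ((N + s + 1) * N ^ 2) := by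
    field_simp; ring
  rw [e, div_le_div_iff₀ (by positivity) (by positivity)]
  calc (Jr ^ 2 + Jr - N) ^ 2 * ((N + s + 1) * N ^ 2)
      ≤ (Jr ^ 2 + s - N) ^ 2 * ((N + s + 1) * N ^ 2) :=
        mul_le_mul_of_nonneg_right h1 (by positivity)
    _ = ((Jr ^ 2 + s - N) ^ 2 * (N + s + 1)) * N ^ 2 := by ring
    _ ≤ ((Jr ^ 2 + 2 * s - 2 * N) * (2 * N + s) ^ 2) * N ^ 2 :=
        mul_le_mul_of_nonneg_right h2 (by positivity)
    _ ≤ (Jr ^ 2 + 2 * s - 2 * N) * (2 * N + s) ^ 2 * (N * (N + Jr + 1)) := by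
        have hd : N ^ 2 ≤ N * (N + Jr + 1) := by nlinarith
        exact mul_le_mul_of_nonneg_left hd (mul_nonneg hc (sq_nonneg _))

private lemma lamSH_eq_aux (N Jr M Num Den F : ℝ) (hF : F ≠ 0) (hN0 : 0 < N) (hJr0 : 0 < Jr)
    (hDen : Den ≠ 0) (hNum : Num ≠ 0) :
    (N + 1) * (F * Num) ^ 2 * M ^ 2 /
      (F * ((N + 1) * N * F * Num * ((N + 1 + Jr) * Den)))
    = M ^ 2 / (N * (N + Jr + 1)) * (Num / Den) := by
  have h1 : N + 1 + Jr ≠ 0 := by positivity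
  have h2 : N + Jr + 1 ≠ 0 := by positivity
  have h3 : N + 1 ≠ 0 := by positivity
  field_simp
  ring

private lemma lamSH_arg_aux (N s : ℝ) (hN0 : 0 < N) (hs9 : 9 ≤ s) (hs2 : s ^ 2 = 3 * N) :
    -3 * (1 - 1 / s) / (1 + s / N + 1 / N) = -(3 * N - s) / (N + s + 1) := by
  have hsne : s ≠ 0 := by linarith
  have hD : N + s + 1 ≠ 0 := by positivity
  field_simp
  nlinarith [hs2]

set_option maxHeartbeats 1000000 in
theorem lamSH_sqrt_three_n_bound (n : ℕ) (hn : 27 ≤ n) :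
    lamSH n (Nat.sqrt (3 * n))
      ≤ Real.exp (-3 * (1 - 1 / Real.sqrt (3 * (n : ℝ)))
            / (1 + Real.sqrt 3 / Real.sqrt (n : ℝ) + 1 / (n : ℝ)))
        * (2 + Real.sqrt (3 / (n : ℝ))) ^ 2 := by
  set J : ℕ := Nat.sqrt (3 * n) with hJdef
  -- basic nat facts
  have hJ9 : 9 ≤ J := Nat.le_sqrt'.2 (by omega)
  have hJsq : J ^ 2 ≤ 3 * n := Nat.sqrt_le' _
  have hJlt : 3 * n < (J + 1) ^ 2 := Nat.lt_succ_sqrt' _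
  have hJn : J ≤ n := by nlinarith [hJsq, hn]
  -- real abbreviations
  set N : ℝ := (n : ℝ) with hNdef
  have hN27 : (27:ℝ) ≤ N := by rw [hNdef]; exact_mod_cast hn
  have hN0 : (0:ℝ) < N := by linarith
  set s : ℝ := Real.sqrt (3 * N) with hsdef
  have hs0 : (0:ℝ) ≤ s := Real.sqrt_nonneg _
  have hs2 : s ^ 2 = 3 * N := Real.sq_sqrt (by linarith)
  have hs9 : (9:ℝ) ≤ s := by nlinarith [hs2, hs0, hN27]
  set Jr : ℝ := (J : ℝ) with hJrdef
  have hJr9 : (9:ℝ) ≤ Jr := by rw [hJrdef]; exact_mod_cast hJ9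
  have hJrs : Jr ≤ s := (Real.le_sqrt (by positivity) (by linarith)).2 (by
    rw [hJrdef, hNdef]; exact_mod_cast hJsq)
  have hsJ : s < Jr + 1 := (Real.sqrt_lt' (by positivity)).2 (by
    rw [hJrdef, hNdef]; exact_mod_cast hJlt)
  have hJrN : Jr ≤ N := by nlinarith [hs2, hJrs, hs0, hN27]
  -- rewrite target constants in terms of s
  have hNsq : Real.sqrt N * Real.sqrt N = N := Real.mul_self_sqrt hN0.le
  have hsqrtN : Real.sqrt N ≠ 0 := by positivity
  have hsqrt3N : Real.sqrt 3 * Real.sqrt N = s := (Real.sqrt_mul (by norm_num) N).symm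
  have hdiv3N : Real.sqrt 3 / Real.sqrt N = s / N := by
    rw [div_eq_div_iff hsqrtN hN0.ne', ← hsqrt3N]
    linear_combination (-Real.sqrt 3) * hNsq
  have hdivsqrt : Real.sqrt (3 / N) = s / N := by
    rw [Real.sqrt_div (by norm_num : (0:ℝ) ≤ 3) N, hdiv3N]
  have hArg : -3 * (1 - 1 / s) / (1 + Real.sqrt 3 / Real.sqrt N + 1 / N)
      = -(3 * N - s) / (N + s + 1) := by
    rw [hdiv3N]; exact lamSH_arg_aux N s hN0 hs9 hs2
  -- factorial decompositions
  have hfactBot : (n - 1).factorial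
      = (n - J).factorial * ∏ k ∈ Finset.range (J-1), (n - 1 - k) := by
    have h := fact_add_desc (n-J) (J-1)
    have e1 : n - J + (J-1) = n - 1 := by omega
    rw [e1] at h
    exact h
  have hfactTop : (n + 1 + J).factorial
      = (n+1).factorial * ((n + 1 + J) * ∏ k ∈ Finset.range (J-1), (n + J - k)) := by
    rw [fact_add_desc (n+1) J]
    congr 1
    rw [show Finset.range J = Finset.range ((J-1)+1) by rw [Nat.sub_add_cancel (by omega)],
      Finset.prod_range_succ']
    have h1 : ∀ k ∈ Finset.range (J-1), n + 1 + J - (k + 1) = n + J - k := fun k _ => by omega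
    rw [Finset.prod_congr rfl h1, Nat.sub_zero]
    ring
  -- real-cast versions
  have hfactBotR : (((n - 1).factorial : ℕ) : ℝ)
      = ((n - J).factorial : ℝ) * ∏ k ∈ Finset.range (J-1), (N - 1 - k) := by
    rw [hfactBot, Nat.cast_mul, Nat.cast_prod]
    refine congrArg _ (Finset.prod_congr rfl fun k hk => ?_)
    simp only [Finset.mem_range] at hk
    have h : (n - 1 - k : ℕ) + (1 + k) = n := by omega
    have h2 := congrArg (Nat.cast : ℕ → ℝ) h
    push_cast at h2
    rw [hNdef]; linarith
  have hfactTopR : (((n + 1 + J).factorial : ℕ) : ℝ)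
      = ((n+1).factorial : ℝ) * ((N + 1 + Jr) * ∏ k ∈ Finset.range (J-1), (N + Jr - k)) := by
    rw [hfactTop, Nat.cast_mul, Nat.cast_mul, Nat.cast_prod]
    refine congrArg _ ?_
    have e0 : ((n + 1 + J : ℕ) : ℝ) = N + 1 + Jr := by rw [hNdef, hJrdef]; push_cast; ring
    rw [e0]
    refine congrArg _ (Finset.prod_congr rfl fun k hk => ?_)
    simp only [Finset.mem_range] at hk
    have h : (n + J - k : ℕ) + k = n + J := by omega
    have h2 := congrArg (Nat.cast : ℕ → ℝ) h
    push_cast at h2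
    rw [hNdef, hJrdef]; linarith
  have hfactSucc : (((n+1).factorial : ℕ) : ℝ) = (N + 1) * N * (((n-1).factorial : ℕ) : ℝ) := by
    have h : (n+1).factorial = (n+1) * (n * (n-1).factorial) := by
      rw [show n + 1 = (n - 1) + 1 + 1 by omega, Nat.factorial_succ, Nat.factorial_succ,
        show n - 1 + 1 = n by omega]
    rw [h]; rw [hNdef]; push_cast; ring
  -- abbreviations
  set M : ℝ := Jr ^ 2 + Jr - N with hMdef
  set Num : ℝ := ∏ k ∈ Finset.range (J-1), (N - 1 - k) with hNumdef
  set Den : ℝ := ∏ k ∈ Finset.range (J-1), (N + Jr - k) with hDenDef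
  have hkub : ∀ k ∈ Finset.range (J-1), (k:ℝ) ≤ Jr - 2 := by
    intro k hk
    simp only [Finset.mem_range] at hk
    have h : ((k + 2 : ℕ) : ℝ) ≤ Jr := by rw [hJrdef]; exact_mod_cast (by omega : k + 2 ≤ J)
    push_cast at h; linarith
  have hDen0 : (0:ℝ) < Den := by
    rw [hDenDef]
    exact Finset.prod_pos fun k hk => by have := hkub k hk; linarith
  have hNum0 : (0:ℝ) < Num := by
    rw [hNumdef]
    exact Finset.prod_pos fun k hk => by have := hkub k hk; linarith
  have hT : (((n + 1 + J).factorial : ℕ) : ℝ)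
      = (N + 1) * N * (((n - J).factorial : ℕ) : ℝ) * Num * ((N + 1 + Jr) * Den) := by
    rw [hfactTopR, hfactSucc, hfactBotR]; ring
  have hfb : (0:ℝ) < ((n - J).factorial : ℕ) := by exact_mod_cast (n-J).factorial_pos
  -- the product form of lamSH
  have hlam : lamSH n J = M ^ 2 / (N * (N + Jr + 1)) * (Num / Den) := by
    show ((n : ℝ) + 1) * (((n - 1).factorial : ℝ)) ^ 2 * ((J : ℝ) ^ 2 + (J : ℝ) - (n : ℝ)) ^ 2 /
      (((n - J).factorial : ℝ) * ((n + 1 + J).factorial : ℝ)) = _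
    rw [hfactBotR, hT, ← hNdef, ← hJrdef, ← hMdef]
    exact lamSH_eq_aux N Jr M Num Den _ hfb.ne' hN0 (by linarith) hDen0.ne' hNum0.ne'
  -- bound the product Num / Den
  have hD0 : (0:ℝ) < N + s + 1 := by positivity
  have hProd : Num / Den ≤ Real.exp (-((Jr ^ 2 - 1) / (N + s + 1))) := by
    rw [hNumdef, hDenDef, ← Finset.prod_div_distrib]
    have hterm : ∀ k ∈ Finset.range (J-1),
        (N - 1 - k) / (N + Jr - k) ≤ Real.exp (-((Jr + 1) / (N + s + 1))) := by
      intro k hk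
      have hkb := hkub k hk
      have hden : (0:ℝ) < N + Jr - k := by linarith
      have hdenle : N + Jr - k ≤ N + s + 1 := by linarith
      have h1 : (N - 1 - k) / (N + Jr - k) = 1 - (Jr + 1) / (N + Jr - k) := by
        field_simp
        ring
      have h2 : (Jr + 1) / (N + s + 1) ≤ (Jr + 1) / (N + Jr - k) :=
        div_le_div_of_nonneg_left (by linarith) hden hdenle
      have h3 := Real.add_one_le_exp (-((Jr + 1) / (N + s + 1)))
      rw [h1]; linarith
    have hnn : ∀ k ∈ Finset.range (J-1), (0:ℝ) ≤ (N - 1 - k) / (N + Jr - k) := by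
      intro k hk
      have hkb := hkub k hk
      have h1 : (0:ℝ) < N + Jr - k := by linarith
      have h2 : (0:ℝ) ≤ N - 1 - k := by linarith
      positivity
    calc (∏ k ∈ Finset.range (J-1), ((N - 1 - k) / (N + Jr - k)))
        ≤ ∏ _k ∈ Finset.range (J-1), Real.exp (-((Jr + 1) / (N + s + 1))) :=
          Finset.prod_le_prod hnn hterm
      _ = Real.exp (-((Jr + 1) / (N + s + 1))) ^ (J - 1) := by
          rw [Finset.prod_const, Finset.card_range]
      _ = Real.exp (((J - 1 : ℕ) : ℝ) * (-((Jr + 1) / (N + s + 1)))) :=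
          (Real.exp_nat_mul _ _).symm
      _ = Real.exp (-((Jr ^ 2 - 1) / (N + s + 1))) := by
          have e : ((J - 1 : ℕ) : ℝ) = Jr - 1 := by
            rw [hJrdef]; push_cast [Nat.cast_sub (by omega : 1 ≤ J)]; ring
          rw [e]; congr 1; field_simp; ring
  -- assemble
  have hA0 : (0:ℝ) ≤ M ^ 2 / (N * (N + Jr + 1)) := by positivity
  have hkey := lamSH_core_s14 N s Jr hN27 hs0 hs2 hJr9 hJrs hsJ
  rw [← hMdef] at hkey
  have hsplit : Real.exp (-(3*N - s) / (N + s + 1))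
      = Real.exp ((Jr ^ 2 - 1 - 3*N + s) / (N + s + 1))
        * Real.exp (-((Jr ^ 2 - 1) / (N + s + 1))) := by
    rw [← Real.exp_add]; congr 1; field_simp; ring
  have hfac2 : (2 : ℝ) + s / N = (2*N + s) / N := by field_simp
  rw [hArg, hdivsqrt, hfac2]
  have hexp0 : (0:ℝ) ≤ Real.exp (-((Jr ^ 2 - 1) / (N + s + 1))) := (Real.exp_pos _).le
  calc lamSH n J = M ^ 2 / (N * (N + Jr + 1)) * (Num / Den) := hlam
    _ ≤ M ^ 2 / (N * (N + Jr + 1)) * Real.exp (-((Jr ^ 2 - 1) / (N + s + 1))) :=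
        mul_le_mul_of_nonneg_left hProd hA0
    _ ≤ ((1 + (Jr ^ 2 - 1 - 3*N + s) / (N + s + 1)) * ((2*N + s)/N) ^ 2)
          * Real.exp (-((Jr ^ 2 - 1) / (N + s + 1))) :=
        mul_le_mul_of_nonneg_right hkey hexp0
    _ ≤ (Real.exp ((Jr ^ 2 - 1 - 3*N + s) / (N + s + 1)) * ((2*N + s)/N) ^ 2)
          * Real.exp (-((Jr ^ 2 - 1) / (N + s + 1))) := by
        have h3 := Real.add_one_le_exp ((Jr ^ 2 - 1 - 3*N + s) / (N + s + 1))
        have h4 : (0:ℝ) ≤ ((2*N + s)/N) ^ 2 := sq_nonneg _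
        exact mul_le_mul_of_nonneg_right
          (mul_le_mul_of_nonneg_right (by linarith) h4) hexp0
    _ = Real.exp (-(3*N - s) / (N + s + 1)) * ((2*N + s)/N) ^ 2 := by
        rw [hsplit]; ring
end

section
/- For an integer n ≥ 27 and each integer 0 ≤ J ≤ n, define λ^{(J)} = (n+1)·((n−1)!)²·(J²+J−n)² / ((n−J)!·(n+1+J)!). Then λ^{(⌊√(3n)⌋)} ≤ (49/9)·e^{−72/37}, while λ^{(1)} = (n−2)²/(n(n+2)) ≥ 625/783, and (49/9)·e^{−72/37} < 625/783; consequently λ^{(⌊√(3n)⌋)} < λ^{(1)}. -/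
open Real

noncomputable def lamSHWeight (n J : ℕ) : ℝ :=
  ((n : ℝ) + 1) * ((n - 1).factorial : ℝ) ^ 2 /
    (((n - J).factorial : ℝ) * ((n + 1 + J).factorial : ℝ))

lemma lamSH_eq_mul_lamSHWeight (n J : ℕ) :
    lamSH n J = ((J : ℝ) ^ 2 + J - n) ^ 2 * lamSHWeight n J := by
  unfold lamSH lamSHWeight
  ring

lemma lamSHWeight_nonneg (n J : ℕ) : 0 ≤ lamSHWeight n J := by
  unfold lamSHWeight
  positivity

lemma lamSHWeight_one {n : ℕ} (hn : 1 ≤ n) : lamSHWeight n 1 = 1 / (n * (n + 2)) := by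
  obtain ⟨m, rfl⟩ := Nat.exists_eq_add_of_le' hn
  simp only [lamSHWeight, Nat.add_sub_cancel, show m + 1 + 1 + 1 = m + 3 by ring,
    Nat.factorial_succ]
  push_cast
  field_simp
  ring

lemma lamSHWeight_succ {n J : ℕ} (hJ : J < n) :
    lamSHWeight n (J + 1) = lamSHWeight n J * ((n - J) / (n + J + 2)) := by
  obtain ⟨m, rfl⟩ := Nat.exists_eq_add_of_lt hJ
  simp only [lamSHWeight, show J + m + 1 - J = m + 1 by omega,
    show J + m + 1 - (J + 1) = m by omega,
    show J + m + 1 + 1 + (J + 1) = (J + m + 1 + 1 + J) + 1 by ring, Nat.factorial_succ]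
  push_cast
  field_simp
  ring

lemma one_sub_div_le_exp_neg_div {a b D : ℝ} (ha : 0 ≤ a) (hb : 0 < b) (hbD : b ≤ D) :
    1 - a / b ≤ exp (-(a / D)) :=
  (one_sub_le_exp_neg _).trans <| exp_le_exp.mpr <| neg_le_neg <|
    div_le_div_of_nonneg_left ha hb hbD

lemma lamSHWeight_le_mul_exp {n J : ℕ} {D : ℝ} (hJ : 1 ≤ J) (hJn : J ≤ n) (hD : n + J + 1 ≤ D) :
    lamSHWeight n J ≤ lamSHWeight n 1 * exp (-(((J : ℝ) - 1) * (J + 2) / D)) := by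
  induction J, hJ using Nat.le_induction with
  | base => simp
  | succ J hJ ih =>
    push_cast at hD ⊢
    have hstep : ((n : ℝ) - J) / (n + J + 2) ≤ exp (-((2 * J + 2) / D)) := by
      rw [show ((n : ℝ) - J) / (n + J + 2) = 1 - (2 * J + 2) / (n + J + 2) by field_simp; ring]
      exact one_sub_div_le_exp_neg_div (by positivity) (by positivity) (by linarith)
    have hfac : 0 ≤ ((n : ℝ) - J) / (n + J + 2) := by
      have : (J : ℝ) ≤ n := by exact_mod_cast (Nat.le_succ J).trans hJn
      exact div_nonneg (by linarith) (by positivity)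
    calc lamSHWeight n (J + 1) = lamSHWeight n J * ((n - J) / (n + J + 2)) :=
          lamSHWeight_succ hJn
      _ ≤ lamSHWeight n 1 * exp (-(((J : ℝ) - 1) * (J + 2) / D)) * exp (-((2 * J + 2) / D)) :=
          mul_le_mul (ih (by omega) (by linarith)) hstep hfac
            (mul_nonneg (lamSHWeight_nonneg n 1) (exp_pos _).le)
      _ = lamSHWeight n 1 * exp (-(((J : ℝ) + 1 - 1) * (J + 1 + 2) / D)) := by
          rw [mul_assoc, ← exp_add]
          ring_nf

lemma lamSH_le_mul_exp {n J : ℕ} (hJ : 1 ≤ J) (hJn : J ≤ n) :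
    lamSH n J ≤ ((J : ℝ) ^ 2 + J - n) ^ 2 / (n * (n + 2)) *
      exp (-(((J : ℝ) - 1) * (J + 2) / (n + J + 1))) := by
  rw [lamSH_eq_mul_lamSHWeight, div_eq_mul_one_div, mul_assoc, ← lamSHWeight_one (hJ.trans hJn)]
  exact mul_le_mul_of_nonneg_left (lamSHWeight_le_mul_exp hJ hJn le_rfl) (sq_nonneg _)

lemma lamSH_sqrt_three_mul_le {n : ℕ} (hn : 27 ≤ n) :
    lamSH n (Nat.sqrt (3 * n)) ≤ 49 / 9 * exp (-72 / 37) := by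
  set J := Nat.sqrt (3 * n)
  have h9 : 9 ≤ J := Nat.le_sqrt.mpr (by omega)
  have hlo : (J : ℝ) ^ 2 ≤ 3 * n := by exact_mod_cast Nat.sqrt_le' (3 * n)
  have hhi : 3 * (n : ℝ) ≤ J ^ 2 + 2 * J := by
    exact_mod_cast (by nlinarith [Nat.lt_succ_sqrt' (3 * n)] : 3 * n ≤ J ^ 2 + 2 * J)
  have h9r : (9 : ℝ) ≤ J := by exact_mod_cast h9
  have h3J : 3 * (J : ℝ) ≤ n := by nlinarith
  have hJn : J ≤ n := by exact_mod_cast (by linarith : (J : ℝ) ≤ n)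
  have hquad : ((J : ℝ) ^ 2 + J - n) ^ 2 / (n * (n + 2)) ≤ 49 / 9 := by
    rw [div_le_iff₀ (by nlinarith)]
    have h0 : 0 ≤ (J : ℝ) ^ 2 + J - n := by nlinarith
    have h7 : (J : ℝ) ^ 2 + J - n ≤ 7 / 3 * n := by linarith
    nlinarith
  have hexp : 72 / 37 ≤ ((J : ℝ) - 1) * (J + 2) / (n + J + 1) := by
    rw [le_div_iff₀ (by positivity)]
    nlinarith
  calc lamSH n J ≤ ((J : ℝ) ^ 2 + J - n) ^ 2 / (n * (n + 2)) *
        exp (-(((J : ℝ) - 1) * (J + 2) / (n + J + 1))) :=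
        lamSH_le_mul_exp (by omega) hJn
    _ ≤ 49 / 9 * exp (-72 / 37) := by
        gcongr
        linarith

lemma mul_exp_neg_72_div_37_lt : (49 : ℝ) / 9 * exp (-72 / 37) < 625 / 783 := by
  have hsmall : exp (2 / 37) ≤ 37 / 35 :=
    (exp_bound_div_one_sub_of_interval (by norm_num) (by norm_num)).trans_eq (by norm_num)
  calc (49 : ℝ) / 9 * exp (-72 / 37) = 49 / 9 * (exp (-1) ^ 2 * exp (2 / 37)) := by
        rw [← exp_nat_mul, ← exp_add]
        norm_num
    _ ≤ 49 / 9 * (0.3678794412 ^ 2 * (37 / 35)) := by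
        gcongr
        exact exp_neg_one_lt_d9.le
    _ < 625 / 783 := by norm_num

lemma lamSH_one {n : ℕ} (hn : 1 ≤ n) :
    lamSH n 1 = ((n : ℝ) - 2) ^ 2 / (n * (n + 2)) := by
  rw [lamSH_eq_mul_lamSHWeight, lamSHWeight_one hn]
  push_cast
  ring

lemma le_sub_two_sq_div {n : ℝ} (hn : 27 ≤ n) : 625 / 783 ≤ (n - 2) ^ 2 / (n * (n + 2)) := by
  rw [le_div_iff₀ (by positivity)]
  nlinarith

theorem lamSH_sqrt_three_n_lt_lamSH_one (n : ℕ) (hn : 27 ≤ n) :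
    lamSH n (Nat.sqrt (3 * n)) ≤ 49 / 9 * Real.exp (-72 / 37)
    ∧ lamSH n 1 = ((n : ℝ) - 2) ^ 2 / ((n : ℝ) * ((n : ℝ) + 2))
    ∧ 625 / 783 ≤ lamSH n 1
    ∧ (49 : ℝ) / 9 * Real.exp (-72 / 37) < 625 / 783
    ∧ lamSH n (Nat.sqrt (3 * n)) < lamSH n 1 := by
  have hsqrt := lamSH_sqrt_three_mul_le hn
  have hone := lamSH_one (n := n) (by omega)
  have hone_ge : 625 / 783 ≤ lamSH n 1 := hone ▸ le_sub_two_sq_div (by exact_mod_cast hn)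
  exact ⟨hsqrt, hone, hone_ge, mul_exp_neg_72_div_37_lt,
    hsqrt.trans_lt (mul_exp_neg_72_div_37_lt.trans_le hone_ge)⟩
end

section
/- The real-valued function x ↦ exp( −3·(1 − 1/√(3x)) / (1 + √3/√x + 1/x) ) · (2 + √(3/x))² is monotone decreasing for x > 0, and for all x ≥ 27 its value is at most exp(−3·(1 − 1/9)/(1 + 1/3 + 1/27))·(2 + 1/3)² = (49/9)·e^{−72/37}. -/
/-!
In the variable `s = √(3 / x)` the function becomes
`reducedBound s = exp (-3 (3 - s) / (s² + 3s + 3)) · (2 + s)²`, whose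
derivative `exp (…) · (2 + s) (2s⁴ + 9s³ + 42s² + 108s + 90) / (s² + 3s + 3)²` is
nonnegative for `s ≥ 0`.
As `s` decreases in `x`, so does the function; its value at `x = 27` is `reducedBound (1 / 3)`.
-/

open Real Set

noncomputable def reducedBound (s : ℝ) : ℝ :=
  exp (-3 * (3 - s) / (s ^ 2 + 3 * s + 3)) * (2 + s) ^ 2

lemma sq_add_three_mul_add_three_pos (s : ℝ) : 0 < s ^ 2 + 3 * s + 3 := by
  nlinarith [sq_nonneg (s + 3 / 2)]

lemma hasDerivAt_reducedBound (s : ℝ) :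
    HasDerivAt reducedBound
      (exp (-3 * (3 - s) / (s ^ 2 + 3 * s + 3)) * (2 + s)
        * (2 * s ^ 4 + 9 * s ^ 3 + 42 * s ^ 2 + 108 * s + 90) / (s ^ 2 + 3 * s + 3) ^ 2) s := by
  have hq := (sq_add_three_mul_add_three_pos s).ne'
  have hnum : HasDerivAt (fun s => -3 * (3 - s)) 3 s := by
    simpa using ((hasDerivAt_id s).const_sub 3).const_mul (-3 : ℝ)
  have hden : HasDerivAt (fun s => s ^ 2 + 3 * s + 3) (2 * s + 3) s := by
    simpa using ((hasDerivAt_pow 2 s).add ((hasDerivAt_id s).const_mul 3)).add_const 3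
  have hsq : HasDerivAt (fun s => (2 + s) ^ 2) (2 * (2 + s)) s := by
    simpa using ((hasDerivAt_id s).const_add 2).fun_pow 2
  refine ((hnum.fun_div hden hq).exp.fun_mul hsq).congr_deriv ?_
  -- `field_simp` normalizes the expanded quadratic out of `hq`'s shape, so cancel it as an atom
  set q := s ^ 2 + 3 * s + 3 with hq_def
  field_simp
  rw [hq_def]
  ring

lemma reducedBound_monotoneOn : MonotoneOn reducedBound (Ici 0) := by
  refine monotoneOn_of_hasDerivWithinAt_nonneg (convex_Ici 0)
    (fun s _ => (hasDerivAt_reducedBound s).continuousAt.continuousWithinAt)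
    (fun s _ => (hasDerivAt_reducedBound s).hasDerivWithinAt) fun s hs => ?_
  rw [interior_Ici, mem_Ioi] at hs
  positivity

lemma reducedBound_sqrt_three_div {x : ℝ} (hx : 0 < x) :
    exp (-3 * (1 - 1 / √(3 * x)) / (1 + √3 / √x + 1 / x)) * (2 + √(3 / x)) ^ 2
      = reducedBound √(3 / x) := by
  set s := √(3 / x) with hs
  have hs_sq : s ^ 2 = 3 / x := sq_sqrt (by positivity)
  have h_div : √3 / √x = s := (sqrt_div (by norm_num) x).symm
  have h_inv : 1 / √(3 * x) = s / 3 := by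
    rw [hs, sqrt_div (by norm_num), sqrt_mul (by norm_num)]
    have h3 : √3 ^ 2 = 3 := sq_sqrt (by norm_num)
    have hx' : 0 < √x := sqrt_pos.2 hx
    field_simp
    linarith
  have h_inv_x : 1 / x = s ^ 2 / 3 := by rw [hs_sq]; field_simp
  rw [h_div, h_inv, h_inv_x, reducedBound]
  congr 2
  field_simp
  ring

lemma reducedBound_one_third : reducedBound (1 / 3) = 49 / 9 * exp (-72 / 37) := by
  norm_num [reducedBound, mul_comm]

theorem bound_function_antitone_and_value :
    AntitoneOn
      (fun x : ℝ => Real.exp (-3 * (1 - 1 / Real.sqrt (3 * x))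
          / (1 + Real.sqrt 3 / Real.sqrt x + 1 / x)) * (2 + Real.sqrt (3 / x)) ^ 2)
      (Set.Ioi (0 : ℝ))
    ∧ Real.exp (-3 * (1 - 1 / 9) / (1 + 1 / 3 + 1 / 27)) * ((2 : ℝ) + 1 / 3) ^ 2
        = 49 / 9 * Real.exp (-72 / 37)
    ∧ ∀ x : ℝ, 27 ≤ x →
        Real.exp (-3 * (1 - 1 / Real.sqrt (3 * x))
            / (1 + Real.sqrt 3 / Real.sqrt x + 1 / x)) * (2 + Real.sqrt (3 / x)) ^ 2
          ≤ 49 / 9 * Real.exp (-72 / 37) := by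
  have hmono {x y : ℝ} (hx : 0 < x) (hxy : x ≤ y) :
      reducedBound √(3 / y) ≤ reducedBound √(3 / x) :=
    reducedBound_monotoneOn (sqrt_nonneg _) (sqrt_nonneg _)
      (sqrt_le_sqrt (div_le_div_of_nonneg_left zero_le_three hx hxy))
  have h27 : √(3 / 27) = 1 / 3 := by
    rw [show (3 / 27 : ℝ) = (1 / 3) ^ 2 by norm_num, sqrt_sq (by norm_num)]
  refine ⟨fun x hx y hy hxy => ?_, by norm_num [mul_comm], fun x hx => ?_⟩
  · simpa only [reducedBound_sqrt_three_div hx, reducedBound_sqrt_three_div hy] using hmono hx hxy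
  · rw [reducedBound_sqrt_three_div (by linarith), ← reducedBound_one_third, ← h27]
    exact hmono (by norm_num) hx
end

section
/- Fix natural numbers d ≥ 0 and k ≥ 1. For integers n with n ≥ max(k, d), define λ^{(k)}(n) = [ n!·(n+1)! / ((n−k)!·(n+k+1)!) ] · ( Σ_{z=0}^{d} (−1)^z · C(n−k, z) · C(k, d−z)² / C(n,d) )². Then lim_{n→∞} n·(1 − λ^{(k)}(n)) = k(k+1)(2d+1); equivalently, with ℏ = 1/n, λ^{(k)}(n) = 1 − k(k+1)(2d+1)·ℏ + O(ℏ²) as n → ∞. -/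
/-!
Write `λ⁽ᵏ⁾(n) = F(n) · Q(n)²` with `F(n) = ∏_{i<k} (n - i)/(n + k + 1 - i)` and `Q(n)` the
alternating sum normalised by the sign `(-1)^d`. Call `lim n (1 - f(n))` the defect of `f`;
defects add under products. Each factor of `F` has defect `k + 1`, so `F` has defect `k(k + 1)`.
In `Q`, the term `z = d` is `C(n-k,d)/C(n,d) = ∏_{i<d} (n - k - i)/(n - i)`, of defect `dk`; the
term `z = d - 1` is `-k² C(n-k,d-1)/C(n,d) ~ -k² d/n`, adding `dk²`; the terms `z < d - 1` are
`o(1/n)`, by comparing degrees of descending Pochhammer polynomials. Hence `λ⁽ᵏ⁾` has defect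
`k(k + 1) + 2dk(k + 1)`.
-/

open scoped BigOperators

/-- The eigenvalue `λ⁽ᵏ⁾(n)` of the Berezin transform `B_{j,j−d}` (with `n = 2j`), given by
Theorem 2 of the paper. -/
noncomputable def lamEigen (k d n : ℕ) : ℝ :=
  ((n.factorial : ℝ) * ((n + 1).factorial : ℝ)) /
      (((n - k).factorial : ℝ) * ((n + k + 1).factorial : ℝ)) *
    ((∑ z ∈ Finset.range (d + 1),
        (-1 : ℝ) ^ z * ((n - k).choose z : ℝ) * ((k.choose (d - z) : ℝ)) ^ 2) /
      (n.choose d : ℝ)) ^ 2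

open Filter Topology Finset Polynomial

theorem tendsto_natCast_mul_one_sub_div_sub (a b : ℝ) :
    Tendsto (fun n : ℕ => (n : ℝ) * (1 - ((n : ℝ) - a) / ((n : ℝ) - b))) atTop (𝓝 (a - b)) := by
  have h := (tendsto_natCast_div_add_atTop (-b : ℝ)).const_mul (a - b)
  rw [mul_one] at h
  refine h.congr' ?_
  filter_upwards [eventually_gt_atTop ⌈b⌉₊] with n hn
  have hnb : (n : ℝ) - b ≠ 0 := (sub_pos.2 (Nat.lt_of_ceil_lt hn)).ne'
  rw [← sub_eq_add_neg]
  field_simp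
  ring

theorem tendsto_one_of_tendsto_natCast_mul_one_sub {f : ℕ → ℝ} {c : ℝ}
    (h : Tendsto (fun n : ℕ => (n : ℝ) * (1 - f n)) atTop (𝓝 c)) :
    Tendsto f atTop (𝓝 1) := by
  have h0 := h.div_atTop tendsto_natCast_atTop_atTop
  rw [← sub_zero (1 : ℝ)]
  refine (tendsto_const_nhds.sub h0).congr' ?_
  filter_upwards [eventually_ne_atTop 0] with n hn
  field_simp
  ring

theorem tendsto_natCast_mul_one_sub_mul {f g : ℕ → ℝ} {a b : ℝ}
    (hf : Tendsto (fun n : ℕ => (n : ℝ) * (1 - f n)) atTop (𝓝 a))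
    (hg : Tendsto (fun n : ℕ => (n : ℝ) * (1 - g n)) atTop (𝓝 b)) :
    Tendsto (fun n : ℕ => (n : ℝ) * (1 - f n * g n)) atTop (𝓝 (a + b)) := by
  have h := (hf.mul (tendsto_one_of_tendsto_natCast_mul_one_sub hg)).add hg
  rw [mul_one] at h
  exact h.congr fun n => by ring

theorem tendsto_natCast_mul_one_sub_prod {ι : Type*} (s : Finset ι) {f : ι → ℕ → ℝ} {c : ι → ℝ}
    (h : ∀ i ∈ s, Tendsto (fun n : ℕ => (n : ℝ) * (1 - f i n)) atTop (𝓝 (c i))) :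
    Tendsto (fun n : ℕ => (n : ℝ) * (1 - ∏ i ∈ s, f i n)) atTop (𝓝 (∑ i ∈ s, c i)) := by
  induction s using Finset.cons_induction with
  | empty => simp
  | cons a s ha ih =>
    simp only [prod_cons, sum_cons]
    exact tendsto_natCast_mul_one_sub_mul (h a (mem_cons_self a s))
      (ih fun i hi => h i (mem_cons_of_mem hi))

theorem Nat.cast_descFactorial_eq_prod_range {R : Type*} [CommRing R] (n k : ℕ) :
    (n.descFactorial k : R) = ∏ i ∈ range k, ((n : R) - i) := by
  rw [← descPochhammer_eval_eq_descFactorial, descPochhammer_eval_eq_prod_range]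

theorem factorial_ratio_eq_prod {k n : ℕ} (h : k ≤ n) :
    ((n.factorial : ℝ) * ((n + 1).factorial : ℝ)) /
        (((n - k).factorial : ℝ) * ((n + k + 1).factorial : ℝ)) =
      ∏ i ∈ range k, ((n : ℝ) - i) / ((n : ℝ) + k + 1 - i) := by
  have hn : ((n - k).factorial : ℝ) * n.descFactorial k = n.factorial := by
    exact_mod_cast Nat.factorial_mul_descFactorial h
  have hnk : ((n + 1).factorial : ℝ) * (n + k + 1).descFactorial k = (n + k + 1).factorial := by
    have := Nat.factorial_mul_descFactorial (show k ≤ n + k + 1 by omega)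
    rw [show n + k + 1 - k = n + 1 by omega] at this
    exact_mod_cast this
  rw [← hn, ← hnk, prod_div_distrib, Nat.cast_descFactorial_eq_prod_range,
    Nat.cast_descFactorial_eq_prod_range]
  have h1 : ((n - k).factorial : ℝ) ≠ 0 := by positivity
  have h2 : ((n + 1).factorial : ℝ) ≠ 0 := by positivity
  field_simp
  push_cast
  rfl

theorem tendsto_natCast_mul_one_sub_factorial_ratio (k : ℕ) :
    Tendsto (fun n : ℕ => (n : ℝ) * (1 - ((n.factorial : ℝ) * ((n + 1).factorial : ℝ)) /
        (((n - k).factorial : ℝ) * ((n + k + 1).factorial : ℝ)))) atTop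
      (𝓝 ((k : ℝ) * (k + 1))) := by
  have h := tendsto_natCast_mul_one_sub_prod (range k)
    (f := fun i n => ((n : ℝ) - i) / ((n : ℝ) + k + 1 - i)) (c := fun _ => (k : ℝ) + 1)
    fun i _ => by
      convert tendsto_natCast_mul_one_sub_div_sub (i : ℝ) (i - (k + 1)) using 5 <;> ring
  rw [sum_const, card_range, nsmul_eq_mul] at h
  refine h.congr' ?_
  filter_upwards [eventually_ge_atTop k] with n hn
  rw [factorial_ratio_eq_prod hn]

theorem choose_sub_div_choose_eq_prod (k d n : ℕ) (h : k ≤ n) :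
    ((n - k).choose d : ℝ) / (n.choose d : ℝ) =
      ∏ i ∈ range d, ((n : ℝ) - (k + i)) / ((n : ℝ) - i) := by
  rw [Nat.cast_choose_eq_descPochhammer_div, Nat.cast_choose_eq_descPochhammer_div,
    div_div_div_cancel_right₀ (by positivity), descPochhammer_eval_eq_prod_range,
    descPochhammer_eval_eq_prod_range, prod_div_distrib, Nat.cast_sub h]
  congr 1
  exact prod_congr rfl fun i _ => by ring

theorem tendsto_natCast_mul_one_sub_choose_sub_div_choose (k d : ℕ) :
    Tendsto (fun n : ℕ => (n : ℝ) * (1 - ((n - k).choose d : ℝ) / (n.choose d : ℝ))) atTop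
      (𝓝 ((d : ℝ) * k)) := by
  have h := tendsto_natCast_mul_one_sub_prod (range d) (c := fun _ => (k : ℝ))
    fun i _ => by
      simpa only [add_sub_cancel_right] using tendsto_natCast_mul_one_sub_div_sub ((k : ℝ) + i) i
  rw [sum_const, card_range, nsmul_eq_mul] at h
  refine h.congr' ?_
  filter_upwards [eventually_ge_atTop k] with n hn
  rw [choose_sub_div_choose_eq_prod k d n hn]

theorem tendsto_natCast_mul_choose_sub_div_choose {k z d : ℕ} (hzd : z < d) :
    Tendsto (fun n : ℕ => (n : ℝ) * (((n - k).choose z : ℝ) / (n.choose d : ℝ))) atTop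
      (𝓝 (if z + 1 = d then (d : ℝ) else 0)) := by
  set P : ℝ[X] := (descPochhammer ℝ z).comp (X - C (k : ℝ)) * X
  set D : ℝ[X] := descPochhammer ℝ d
  have hPm : P.Monic := ((monic_descPochhammer ℝ z).comp_X_sub_C _).mul monic_X
  have hDm : D.Monic := monic_descPochhammer ℝ d
  have hPdeg : P.natDegree = z + 1 := by
    rw [natDegree_mul_X ((monic_descPochhammer ℝ z).comp_X_sub_C _).ne_zero, natDegree_comp,
      descPochhammer_natDegree, natDegree_X_sub_C, mul_one]
  have hDdeg : D.natDegree = d := descPochhammer_natDegree ℝ d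
  have hlim : Tendsto
      (fun n : ℕ => (d.factorial / z.factorial : ℝ) * (P.eval (n : ℝ) / D.eval (n : ℝ)))
      atTop (𝓝 (if z + 1 = d then (d : ℝ) else 0)) := by
    split_ifs with h
    · have hdeg : P.degree = D.degree := by
        rw [degree_eq_natDegree hPm.ne_zero, degree_eq_natDegree hDm.ne_zero, hPdeg, hDdeg, h]
      have hc : (d : ℝ) = d.factorial / z.factorial * (P.leadingCoeff / D.leadingCoeff) := by
        rw [hPm.leadingCoeff, hDm.leadingCoeff, div_one, mul_one, ← h, Nat.factorial_succ,
          Nat.cast_mul, mul_div_assoc, div_self (by positivity), mul_one]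
      rw [hc]
      exact ((div_tendsto_atTop_leadingCoeff_div_of_degree_eq P D hdeg).comp
        tendsto_natCast_atTop_atTop).const_mul _
    · have hdeg : P.degree < D.degree := degree_lt_degree (by omega)
      have := ((div_tendsto_atTop_zero_of_degree_lt P D hdeg).comp
        tendsto_natCast_atTop_atTop).const_mul (d.factorial / z.factorial : ℝ)
      rwa [mul_zero] at this
  refine hlim.congr' ?_
  filter_upwards [eventually_ge_atTop k] with n hn
  simp only [P, D, eval_mul, eval_comp, eval_sub, eval_X, eval_C,
    Nat.cast_choose_eq_descPochhammer_div, Nat.cast_sub hn]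
  field_simp

noncomputable def overlapRatio (k d n : ℕ) : ℝ :=
  ∑ z ∈ range (d + 1),
    (-1 : ℝ) ^ (d + z) * (k.choose (d - z) : ℝ) ^ 2 * (((n - k).choose z : ℝ) / (n.choose d : ℝ))

theorem lamEigen_eq_mul_overlapRatio_sq (k d n : ℕ) :
    lamEigen k d n = ((n.factorial : ℝ) * ((n + 1).factorial : ℝ)) /
        (((n - k).factorial : ℝ) * ((n + k + 1).factorial : ℝ)) * overlapRatio k d n ^ 2 := by
  have hsign : overlapRatio k d n = (-1) ^ d *
      ((∑ z ∈ range (d + 1), (-1 : ℝ) ^ z * ((n - k).choose z : ℝ) * ((k.choose (d - z) : ℝ)) ^ 2) /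
        (n.choose d : ℝ)) := by
    rw [overlapRatio, sum_div, mul_sum]
    exact sum_congr rfl fun z _ => by ring
  rw [lamEigen, hsign, mul_pow, ← pow_mul, mul_comm d, pow_mul, neg_one_sq, one_pow, one_mul]

theorem tendsto_natCast_mul_one_sub_overlapRatio (k d : ℕ) :
    Tendsto (fun n : ℕ => (n : ℝ) * (1 - overlapRatio k d n)) atTop
      (𝓝 ((d : ℝ) * k * (k + 1))) := by
  have hlower := tendsto_finsetSum (range d) fun z hz =>
    (tendsto_natCast_mul_choose_sub_div_choose (k := k) (mem_range.1 hz)).const_mul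
      ((-1 : ℝ) ^ (d + z) * (k.choose (d - z) : ℝ) ^ 2)
  have hcoeff : ∑ z ∈ range d, (-1 : ℝ) ^ (d + z) * (k.choose (d - z) : ℝ) ^ 2 *
      (if z + 1 = d then (d : ℝ) else 0) = -((d : ℝ) * k ^ 2) := by
    cases d with
    | zero => simp
    | succ d =>
      rw [sum_range_succ, sum_eq_zero fun z hz => by
        rw [if_neg (by rw [mem_range] at hz; omega), mul_zero]]
      simp only [odd_add_one_self, Odd.neg_one_pow, add_tsub_cancel_left, Nat.choose_one_right,
        pow_succ, pow_zero, one_mul, neg_mul, ↓reduceIte, Nat.cast_add, Nat.cast_one]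
      ring
  rw [hcoeff] at hlower
  rw [show (d : ℝ) * k * (k + 1) = d * k - -(d * k ^ 2) by ring]
  refine ((tendsto_natCast_mul_one_sub_choose_sub_div_choose k d).sub hlower).congr fun n => ?_
  rw [overlapRatio, sum_range_succ, ← two_mul, pow_mul, neg_one_sq, one_pow, Nat.sub_self,
    Nat.choose_zero_right]
  simp only [mul_left_comm _ (n : ℝ), ← mul_sum]
  ring

theorem lamEigen_asymptotics_general (d k : ℕ) :
    Filter.Tendsto (fun n : ℕ => (n : ℝ) * (1 - lamEigen k d n)) Filter.atTop
      (nhds ((k : ℝ) * ((k : ℝ) + 1) * (2 * (d : ℝ) + 1))) := by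
  have hoverlap := tendsto_natCast_mul_one_sub_overlapRatio k d
  have h := tendsto_natCast_mul_one_sub_mul (tendsto_natCast_mul_one_sub_factorial_ratio k)
    (tendsto_natCast_mul_one_sub_mul hoverlap hoverlap)
  rw [show (k : ℝ) * (k + 1) * (2 * d + 1) = k * (k + 1) + (d * k * (k + 1) + d * k * (k + 1))
    by ring]
  exact h.congr fun n => by rw [lamEigen_eq_mul_overlapRatio_sq, sq]

theorem lamEigen_asymptotics (d k : ℕ) (hk : 1 ≤ k) :
    Filter.Tendsto (fun n : ℕ => (n : ℝ) * (1 - lamEigen k d n)) Filter.atTop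
      (nhds ((k : ℝ) * ((k : ℝ) + 1) * (2 * (d : ℝ) + 1))) :=
  lamEigen_asymptotics_general d k
end

section
/- For an integer n ≥ 1 and each integer 0 ≤ J ≤ n, define λ^{(J)} = (n+1)·((n−1)!)²·(J²+J−n)² / ((n−J)!·(n+1+J)!). Then max(λ^{(1)}, λ^{(2)}, …, λ^{(n)}) = max(λ^{(1)}, λ^{(⌊√(3n)⌋)}). -/
def Qz (n J : ℕ) : ℤ :=
  -((J:ℤ)^2+J-n)^2 + 2*((J:ℤ)^2+J-n)*((n:ℤ)-J) + 2*((J:ℤ)+1)*((n:ℤ)-J)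

lemma key_ineq (n J : ℕ) (hJ : J < n) (hQ : Qz n J ≤ 0) :
    (((J:ℝ)+1) ^ 2 + ((J:ℝ)+1) - n) ^ 2 * ((n:ℝ) - J)
      ≤ ((J:ℝ)^2 + J - n)^2 * ((n:ℝ) + 2 + J) := by
  have hq : (-(((J:ℝ)^2+J-n))^2 + 2*((J:ℝ)^2+J-n)*((n:ℝ)-J) + 2*((J:ℝ)+1)*((n:ℝ)-J)) ≤ 0 := by
    have := hQ
    unfold Qz at this
    exact_mod_cast this
  nlinarith [hq, sq_nonneg ((J:ℝ)+1)]

lemma key_ineq' (n J : ℕ) (hQ : 0 ≤ Qz n J) :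
    ((J:ℝ)^2 + J - n)^2 * ((n:ℝ) + 2 + J)
      ≤ (((J:ℝ)+1) ^ 2 + ((J:ℝ)+1) - n) ^ 2 * ((n:ℝ) - J) := by
  have hq : (0:ℝ) ≤ (-(((J:ℝ)^2+J-n))^2 + 2*((J:ℝ)^2+J-n)*((n:ℝ)-J) + 2*((J:ℝ)+1)*((n:ℝ)-J)) := by
    have := hQ; unfold Qz at this; exact_mod_cast this
  nlinarith [hq, sq_nonneg ((J:ℝ)+1)]

lemma fact_eq1 (n J : ℕ) (hJ : J < n) :
    (((n - J).factorial : ℝ)) = ((n:ℝ) - J) * (((n - (J+1)).factorial : ℝ)) := by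
  have e1 : n - J = (n - (J+1)) + 1 := by omega
  rw [e1, Nat.factorial_succ]
  have e2 : ((n - (J+1) : ℕ) : ℝ) = (n:ℝ) - J - 1 := by
    have : ((n - (J+1) : ℕ) : ℝ) = ((n:ℝ) - ((J:ℝ)+1)) := by
      push_cast [Nat.cast_sub (show J+1 ≤ n by omega)]; ring
    rw [this]; ring
  push_cast [e2]; ring

lemma fact_eq2 (n J : ℕ) :
    (((n + 1 + (J+1)).factorial : ℝ)) = ((n:ℝ) + 2 + J) * (((n + 1 + J).factorial : ℝ)) := by
  have e : n + 1 + (J+1) = (n + 1 + J) + 1 := by omega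
  rw [e, Nat.factorial_succ]; push_cast; ring

lemma step_le (n J : ℕ) (hJ : J < n) (hQ : Qz n J ≤ 0) :
    lamSH n (J+1) ≤ lamSH n J := by
  unfold lamSH
  rw [div_le_div_iff₀ (by positivity) (by positivity)]
  rw [fact_eq1 n J hJ, fact_eq2 n J]
  have key := key_ineq n J hJ hQ
  have hK : (0:ℝ) ≤ (((n:ℝ)+1) * (((n - 1).factorial : ℝ))^2) *
      ((((n - (J+1)).factorial : ℝ)) * (((n + 1 + J).factorial : ℝ))) := by positivity
  have H := mul_le_mul_of_nonneg_left key hK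
  push_cast
  push_cast at H
  nlinarith [H]

lemma step_ge (n J : ℕ) (hJ : J < n) (hQ : 0 ≤ Qz n J) :
    lamSH n J ≤ lamSH n (J+1) := by
  unfold lamSH
  rw [div_le_div_iff₀ (by positivity) (by positivity)]
  rw [fact_eq1 n J hJ, fact_eq2 n J]
  have key := key_ineq' n J hQ
  have hK : (0:ℝ) ≤ (((n:ℝ)+1) * (((n - 1).factorial : ℝ))^2) *
      ((((n - (J+1)).factorial : ℝ)) * (((n + 1 + J).factorial : ℝ))) := by positivity
  have H := mul_le_mul_of_nonneg_left key hK
  push_cast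
  push_cast at H
  nlinarith [H]

lemma QzL1 (n J : ℕ) (h1 : 1 ≤ J) (hJn : J ≤ n) (h : 3*n < (J+1)*(J+1)) :
    Qz n J ≤ 0 := by
  unfold Qz
  have hx : (1:ℤ) ≤ (J:ℤ) := by exact_mod_cast h1
  have hb : (J:ℤ) ≤ (n:ℤ) := by exact_mod_cast hJn
  have hh : 3*(n:ℤ) + 1 ≤ ((J:ℤ)+1)*((J:ℤ)+1) := by exact_mod_cast h
  nlinarith [sq_nonneg ((J:ℤ)-1), sq_nonneg ((J:ℤ)+1), mul_nonneg (sub_nonneg.mpr hb) (by linarith : (0:ℤ) ≤ (J:ℤ)),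
    mul_le_mul_of_nonneg_left hh (by linarith : (0:ℤ) ≤ (J:ℤ)), sq_nonneg ((J:ℤ)*(J:ℤ)+J-n)]

lemma QzL2 (n J : ℕ) (h1 : 1 ≤ J) (h2 : (J+2)*(J+2) ≤ 3*n) (hQ : 0 ≤ Qz n J) :
    0 ≤ Qz n (J+1) := by
  unfold Qz at *
  have hx : (1:ℤ) ≤ (J:ℤ) := by exact_mod_cast h1
  have hh : ((J:ℤ)+2)*((J:ℤ)+2) ≤ 3*(n:ℤ) := by exact_mod_cast h2
  push_cast
  set x : ℤ := (J:ℤ) with hxdef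
  set N : ℤ := (n:ℤ) with hNdef
  -- a' = x^2+3x+2-N, b' = N-x-1
  rcases le_or_gt (x^2+3*x+2-N) 0 with hneg | hpos
  · -- a' ≤ 0, use hQ
    nlinarith [hQ, hh, hx, sq_nonneg (x+1), mul_nonneg (by nlinarith : (0:ℤ) ≤ N - x - 1) (by linarith : (0:ℤ) ≤ x)]
  · rcases le_or_gt (x^2+3*x+2-N) (2*(N-x-1)) with hmid | hbig
    · -- 0 < a' ≤ 2b'
      nlinarith [mul_nonneg hpos.le (sub_nonneg.mpr hmid), hh, hx]
    · -- a' > 2b'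
      have hA : 3*(x^2+3*x+2-N) ≤ 2*x^2+5*x+2 := by nlinarith
      have hB : 3*((x^2+3*x+2-N) - 2*(N-x-1)) ≤ 3*x := by nlinarith
      nlinarith [mul_le_mul hA hB (by nlinarith) (by nlinarith), hx, hh]


theorem lamSH_max_eq (n : ℕ) (hn : 1 ≤ n) :
    IsGreatest {x : ℝ | ∃ J : ℕ, 1 ≤ J ∧ J ≤ n ∧ x = lamSH n J}
      (max (lamSH n 1) (lamSH n (Nat.sqrt (3 * n)))) := by
  set s := Nat.sqrt (3 * n) with hs
  have hs1 : 1 ≤ s := by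
    rw [hs]; exact Nat.le_sqrt.mpr (by omega)
  have hsn : s ≤ n := by
    rw [hs]
    by_contra hcon
    push_neg at hcon
    have := Nat.sqrt_le' (3*n)
    nlinarith
  have hs_sq : s * s ≤ 3 * n := by have := Nat.sqrt_le' (3*n); nlinarith [this]
  have hs_lt : 3 * n < (s+1) * (s+1) := by have := Nat.lt_succ_sqrt' (3*n); nlinarith [this]
  -- decreasing chain above s
  have chainA : ∀ J, s ≤ J → J ≤ n → lamSH n J ≤ lamSH n s := by
    intro J hJ
    induction J, hJ using Nat.le_induction with
    | base => intro _; exact le_refl _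
    | succ J hJ ih =>
      intro hJn
      have hQ : Qz n J ≤ 0 := by
        apply QzL1 n J (le_trans hs1 hJ) (by omega)
        nlinarith
      exact le_trans (step_le n J (by omega) hQ) (ih (by omega))
  -- increasing chain up to s
  have chainB : ∀ k J, 1 ≤ J → J + k = s → (J = s ∨ 0 ≤ Qz n J) → lamSH n J ≤ lamSH n s := by
    intro k
    induction k with
    | zero => intro J _ hJs _; simp at hJs; rw [hJs]
    | succ k ih =>
      intro J hJ1 hJs hd
      have hQ : 0 ≤ Qz n J := by
        rcases hd with h | h
        · omega
        · exact h
      have hstep := step_ge n J (by omega) hQ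
      refine le_trans hstep (ih (J+1) (by omega) (by omega) ?_)
      rcases Nat.eq_zero_or_pos k with hk | hk
      · left; omega
      · right
        exact QzL2 n J hJ1 (by nlinarith) hQ
  -- decreasing chain from 1 within negative-Q region
  have chainC : ∀ J, 1 ≤ J → J < s → Qz n J < 0 → lamSH n J ≤ lamSH n 1 := by
    intro J hJ
    induction J, hJ using Nat.le_induction with
    | base => intro _ _; exact le_refl _
    | succ J hJ ih =>
      intro hJs hQ
      have hQJ : Qz n J < 0 := by
        by_contra hcon
        push_neg at hcon
        have := QzL2 n J hJ (by nlinarith) hcon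
        omega
      exact le_trans (step_le n J (by omega) hQJ.le) (ih (by omega) hQJ)
  constructor
  · rcases le_total (lamSH n 1) (lamSH n s) with h | h
    · rw [max_eq_right h]; exact ⟨s, hs1, hsn, rfl⟩
    · rw [max_eq_left h]; exact ⟨1, le_refl 1, hn, rfl⟩
  · rintro x ⟨J, hJ1, hJn, rfl⟩
    rcases le_or_gt s J with h | h
    · exact le_trans (chainA J h hJn) (le_max_right _ _)
    · rcases le_or_gt 0 (Qz n J) with hq | hq
      · exact le_trans (chainB (s - J) J hJ1 (by omega) (Or.inr hq)) (le_max_right _ _)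
      · exact le_trans (chainC J hJ1 h hq) (le_max_left _ _)
end
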